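/- Consider the networked control causal factorization over a horizon T with finite alphabets, where the controller is deterministic: for each t there is a function μ_t : 𝕊^t × 𝕌^{t-1} → 𝕌 with π^c_t(u_t | s^t, u^{t-1}) = 1 if u_t = μ_t(s^t, u^{t-1}) and 0 otherwise. Fix t ∈ {1,…,T−1} and (s^t, u^t) with P(S^t = s^t, U^t = u^t) > 0, and define the belief states b_t(x, y^{t-1}, z^t) := P(X_t = x, Y^{t-1} = y^{t-1}, Z^t = z^t | S^{t-1} = s^{t-1}, U^{t-1} = u^{t-1}) and b_{t+1}(x', y^t, z^{t+1}) := P(X_{t+1} = x', Y^t = y^t, Z^{t+1} = z^{t+1} | S^t = s^t, U^t = u^t). Then the belief state satisfies the closed-loop update b_{t+1}(x', y^t, z^{t+1}) = [ P_Z(z_{t+1} | x') · P_Y(y_t | y_{t-1}) · π^e_t(s_t | z^t, s^{t-1}, u^{t-1}) · Σ_{x ∈ 𝕏} P_X(x' | x, y_t, u_t) · b_t(x, y^{t-1}, z^t) ] / [ Σ_{x ∈ 𝕏, ỹ^{t-1} ∈ 𝕐^{t-1}, z̃^t ∈ ℤ^t} π^e_t(s_t | z̃^t, s^{t-1}, u^{t-1})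 · b_t(x, ỹ^{t-1}, z̃^t) ], where u_t = μ_t(s^t, u^{t-1}) and for t = 1 the conditioning of b_1 and of P_Y on index-0 variables is vacuous. -/

import Mathlib

open scoped BigOperators Classical

noncomputable section

namespace NCS

/-- Probability of an event under a pmf `P` on a finite sample space. -/
def pr {Ω : Type} [Fintype Ω] (P : Ω → ℝ) (E : Ω → Prop) : ℝ :=
  ∑ ω, if E ω then P ω else 0

/-- Conditional probability `P(E | F)`, as a ratio of probabilities. -/
def condPr {Ω : Type} [Fintype Ω] (P : Ω → ℝ) (E F : Ω → Prop) : ℝ :=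
  pr P (fun ω => E ω ∧ F ω) / pr P F

/-- Mutual information `I(f ; g)` between two finitely-valued random variables
`f` and `g` defined on a finite sample space with pmf `P` (natural logarithm;
summands with zero probability vanish since `0 * log _ = 0`). -/
def MI {Ω A B : Type} [Fintype Ω] [Fintype A] [Fintype B]
    (P : Ω → ℝ) (f : Ω → A) (g : Ω → B) : ℝ :=
  ∑ a : A, ∑ b : B,
    pr P (fun ω => f ω = a ∧ g ω = b) *
      Real.log (pr P (fun ω => f ω = a ∧ g ω = b) /
        (pr P (fun ω => f ω = a) * pr P (fun ω => g ω = b)))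

/-- Conditional mutual information `I(f ; g | h)`. -/
def condMI {Ω A B C : Type} [Fintype Ω] [Fintype A] [Fintype B] [Fintype C]
    (P : Ω → ℝ) (f : Ω → A) (g : Ω → B) (h : Ω → C) : ℝ :=
  ∑ a : A, ∑ b : B, ∑ c : C,
    pr P (fun ω => f ω = a ∧ g ω = b ∧ h ω = c) *
      Real.log (condPr P (fun ω => f ω = a ∧ g ω = b) (fun ω => h ω = c) /
        (condPr P (fun ω => f ω = a) (fun ω => h ω = c) *
          condPr P (fun ω => g ω = b) (fun ω => h ω = c)))


/-! ### The networked control causal factorization -/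

variable {T : ℕ} {X Y Z S U : Type}

/-- The strict history `a^{t-1} = (a_1, …, a_{t-1})` of a trajectory (0-indexed). -/
def hist {A : Type} (f : Fin T → A) (t : Fin T) : Fin t.1 → A :=
  fun i => f ⟨i.1, lt_trans i.2 t.2⟩

/-- The inclusive history `a^t = (a_1, …, a_t)` of a trajectory (0-indexed). -/
def histIncl {A : Type} (f : Fin T → A) (t : Fin T) : Fin (t.1 + 1) → A :=
  fun i => f ⟨i.1, lt_of_le_of_lt (Nat.lt_succ_iff.mp i.2) t.2⟩

/-- Drop the last entry of a history. -/
def trunc {A : Type} {n : ℕ} (f : Fin (n + 1) → A) : Fin n → A :=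
  fun i => f ⟨i.1, Nat.lt_succ_of_lt i.2⟩

/-- The previous value `a_{t-1}`, or `none` at the initial time (vacuous conditioning). -/
def prevO {A : Type} (f : Fin T → A) (t : Fin T) : Option A :=
  if t.1 = 0 then none
  else some (f ⟨t.1 - 1, lt_of_le_of_lt (Nat.sub_le _ _) t.2⟩)

/-- The previous triple `(x_{t-1}, y_{t-1}, u_{t-1})`, or `none` at the initial time. -/
def prev3 (x : Fin T → X) (y : Fin T → Y) (u : Fin T → U) (t : Fin T) :
    Option (X × Y × U) :=
  if t.1 = 0 then none
  else some (x ⟨t.1 - 1, lt_of_le_of_lt (Nat.sub_le _ _) t.2⟩,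
             y ⟨t.1 - 1, lt_of_le_of_lt (Nat.sub_le _ _) t.2⟩,
             u ⟨t.1 - 1, lt_of_le_of_lt (Nat.sub_le _ _) t.2⟩)

/-- The fixed conditional pmfs (kernels) `P_Y(y_t | y_{t-1})`,
`P_X(x_t | x_{t-1}, y_{t-1}, u_{t-1})`, `P_Z(z_t | x_t)`; conditioning on `none`
encodes the vacuous conditioning at `t = 1`. -/
structure Kernels (X Y Z U : Type) [Fintype X] [Fintype Y] [Fintype Z] [Fintype U] where
  PY : Option Y → Y → ℝ
  PX : Option (X × Y × U) → X → ℝ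
  PZ : X → Z → ℝ
  PY_nonneg : ∀ p y, 0 ≤ PY p y
  PY_sum : ∀ p, ∑ y, PY p y = 1
  PX_nonneg : ∀ p x, 0 ≤ PX p x
  PX_sum : ∀ p, ∑ x, PX p x = 1
  PZ_nonneg : ∀ x z, 0 ≤ PZ x z
  PZ_sum : ∀ x, ∑ z, PZ x z = 1

/-- A quantizer policy family `π^e_t(s_t | z^t, s^{t-1}, u^{t-1})`. -/
def QPol (T : ℕ) (Z S U : Type) : Type :=
  (t : Fin T) → (Fin (t.1 + 1) → Z) → (Fin t.1 → S) → (Fin t.1 → U) → S → ℝ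

/-- A controller policy family `π^c_t(u_t | s^t, u^{t-1})`. -/
def CPol (T : ℕ) (S U : Type) : Type :=
  (t : Fin T) → (Fin (t.1 + 1) → S) → (Fin t.1 → U) → U → ℝ

/-- `π^e` is a family of conditional pmfs. -/
def IsQPol [Fintype S] (πe : QPol T Z S U) : Prop :=
  (∀ t zs ss us st, 0 ≤ πe t zs ss us st) ∧ (∀ t zs ss us, ∑ st, πe t zs ss us st = 1)

/-- `π^c` is a family of conditional pmfs. -/
def IsCPol [Fintype U] (πc : CPol T S U) : Prop :=
  (∀ t ss us ut, 0 ≤ πc t ss us ut) ∧ (∀ t ss us, ∑ ut, πc t ss us ut = 1)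

/-- The sample space of full trajectories `(x^T, y^T, z^T, s^T, u^T)`. -/
abbrev Traj (T : ℕ) (X Y Z S U : Type) : Type :=
  (Fin T → X) × (Fin T → Y) × (Fin T → Z) × (Fin T → S) × (Fin T → U)

def trX (ω : Traj T X Y Z S U) : Fin T → X := ω.1
def trY (ω : Traj T X Y Z S U) : Fin T → Y := ω.2.1
def trZ (ω : Traj T X Y Z S U) : Fin T → Z := ω.2.2.1
def trS (ω : Traj T X Y Z S U) : Fin T → S := ω.2.2.2.1
def trU (ω : Traj T X Y Z S U) : Fin T → U := ω.2.2.2.2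

variable [Fintype X] [Fintype Y] [Fintype Z] [Fintype S] [Fintype U]

/-- The joint pmf of the networked control causal factorization:
`P(x^T, y^T, z^T, s^T, u^T) = ∏_t P_Y(y_t|y_{t-1}) P_X(x_t|x_{t-1},y_{t-1},u_{t-1})
P_Z(z_t|x_t) π^e_t(s_t|z^t,s^{t-1},u^{t-1}) π^c_t(u_t|s^t,u^{t-1})`. -/
def joint (K : Kernels X Y Z U) (πe : QPol T Z S U) (πc : CPol T S U) :
    Traj T X Y Z S U → ℝ :=
  fun (x, y, z, s, u) =>
    ∏ t : Fin T,
      K.PY (prevO y t) (y t) *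
      K.PX (prev3 x y u t) (x t) *
      K.PZ (x t) (z t) *
      πe t (histIncl z t) (hist s t) (hist u t) (s t) *
      πc t (histIncl s t) (hist u t) (u t)


section Generic

variable {Ω V : Type} [Fintype Ω] [Fintype V]

lemma group_sum (get : Ω → V) (set : Ω → V → Ω)
    (hgs : ∀ ω v, get (set ω v) = v)
    (hsg : ∀ ω, set ω (get ω) = ω)
    (hss : ∀ ω v w, set (set ω v) w = set ω w)
    (d : V) (f : Ω → ℝ) :
    ∑ ω, f ω = ∑ ω, if get ω = d then ∑ v, f (set ω v) else 0 := by
  have key : ∀ v : V, ∑ ω ∈ Finset.univ.filter (fun ω => get ω = d), f (set ω v)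
      = ∑ ω ∈ Finset.univ.filter (fun ω => get ω = v), f ω := by
    intro v
    refine Finset.sum_nbij' (fun ω => set ω v) (fun ω => set ω d) ?_ ?_ ?_ ?_ ?_
    · intro a ha; simp [hgs]
    · intro a ha; simp [hgs]
    · intro a ha
      simp only [Finset.mem_filter, Finset.mem_univ, true_and] at ha
      show set (set a v) d = a
      rw [hss, ← ha, hsg]
    · intro a ha
      simp only [Finset.mem_filter, Finset.mem_univ, true_and] at ha
      show set (set a d) v = a
      rw [hss, ← ha, hsg]
    · intro a ha; rfl
  calc ∑ ω, f ω = ∑ ω, ∑ v, if get ω = v then f ω else 0 := by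
        refine Finset.sum_congr rfl fun ω _ => ?_
        simp [Finset.sum_ite_eq]
    _ = ∑ v, ∑ ω, if get ω = v then f ω else 0 := Finset.sum_comm
    _ = ∑ v, ∑ ω ∈ Finset.univ.filter (fun ω => get ω = v), f ω := by
        refine Finset.sum_congr rfl fun v _ => (Finset.sum_filter _ _).symm
    _ = ∑ v, ∑ ω ∈ Finset.univ.filter (fun ω => get ω = d), f (set ω v) := by
        refine Finset.sum_congr rfl fun v _ => (key v).symm
    _ = ∑ ω ∈ Finset.univ.filter (fun ω => get ω = d), ∑ v, f (set ω v) := Finset.sum_comm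
    _ = ∑ ω, if get ω = d then ∑ v, f (set ω v) else 0 := Finset.sum_filter _ _

lemma step_sum (get : Ω → V) (set : Ω → V → Ω)
    (hgs : ∀ ω v, get (set ω v) = v)
    (hsg : ∀ ω, set ω (get ω) = ω)
    (hss : ∀ ω v w, set (set ω v) w = set ω w)
    (d : V) (C : Ω → Prop) (a b : Ω → ℝ)
    (hC : ∀ ω v, C (set ω v) ↔ C ω)
    (ha : ∀ ω v, a (set ω v) = a ω)
    (hb : ∀ ω, ∑ v, b (set ω v) = 1) :
    ∑ ω, (if C ω then a ω * b ω else 0)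
      = ∑ ω, (if C ω ∧ get ω = d then a ω else 0) := by
  rw [group_sum get set hgs hsg hss d (fun ω => if C ω then a ω * b ω else 0)]
  refine Finset.sum_congr rfl fun ω _ => ?_
  by_cases hg : get ω = d
  · simp only [hg, if_true]
    by_cases hc : C ω
    · simp only [hc, hC, ha, if_true, and_true, ← Finset.mul_sum, hb, mul_one]
    · simp [hc, hC]
  · simp [hg]

lemma repin_sum (get : Ω → V) (set : Ω → V → Ω)
    (hgs : ∀ ω v, get (set ω v) = v)
    (hsg : ∀ ω, set ω (get ω) = ω)
    (hss : ∀ ω v w, set (set ω v) w = set ω w)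
    (c₁ c₂ : V) (C : Ω → Prop) (a : Ω → ℝ)
    (hC : ∀ ω v, C (set ω v) ↔ C ω)
    (ha : ∀ ω v, a (set ω v) = a ω) :
    ∑ ω, (if C ω ∧ get ω = c₁ then a ω else 0)
      = ∑ ω, (if C ω ∧ get ω = c₂ then a ω else 0) := by
  rw [group_sum get set hgs hsg hss c₂ (fun ω => if C ω ∧ get ω = c₁ then a ω else 0)]
  refine Finset.sum_congr rfl fun ω _ => ?_
  by_cases hg : get ω = c₂
  · simp only [hg, if_true, and_true]
    have : ∀ v, (if C (set ω v) ∧ get (set ω v) = c₁ then a (set ω v) else 0)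
        = if v = c₁ then (if C ω then a ω else 0) else 0 := by
      intro v
      simp only [hgs, hC, ha]
      by_cases hv : v = c₁ <;> by_cases hc : C ω <;> simp [hv, hc]
    rw [Finset.sum_congr rfl fun v _ => this v]
    simp [Finset.sum_ite_eq']
  · simp [hg]

end Generic

section Ind

open Classical in
/-- Classical indicator: `x` if `P` holds, else `0`. -/
noncomputable def ind (P : Prop) (x : ℝ) : ℝ := if P then x else 0

lemma ind_of_pos {P : Prop} (h : P) (x : ℝ) : ind P x = x := by
  unfold ind; exact if_pos h

lemma ind_of_neg {P : Prop} (h : ¬ P) (x : ℝ) : ind P x = 0 := by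
  unfold ind; exact if_neg h

lemma ind_congr {P Q : Prop} {x y : ℝ} (h : P ↔ Q) (hxy : Q → x = y) :
    ind P x = ind Q y := by
  by_cases hq : Q
  · rw [ind_of_pos (h.mpr hq), ind_of_pos hq, hxy hq]
  · rw [ind_of_neg (fun hp => hq (h.mp hp)), ind_of_neg hq]

lemma ind_eq_ite {P : Prop} [Decidable P] (x : ℝ) : ind P x = if P then x else 0 := by
  by_cases h : P
  · rw [ind_of_pos h, if_pos h]
  · rw [ind_of_neg h, if_neg h]

lemma ind_mul_left {P : Prop} (c x : ℝ) : ind P (c * x) = c * ind P x := by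
  by_cases h : P
  · rw [ind_of_pos h, ind_of_pos h]
  · rw [ind_of_neg h, ind_of_neg h, mul_zero]

variable {Ω V : Type} [Fintype Ω] [Fintype V]

lemma group_sum' (get : Ω → V) (set : Ω → V → Ω)
    (hgs : ∀ ω v, get (set ω v) = v)
    (hsg : ∀ ω, set ω (get ω) = ω)
    (hss : ∀ ω v w, set (set ω v) w = set ω w)
    (d : V) (f : Ω → ℝ) :
    ∑ ω, f ω = ∑ ω, ind (get ω = d) (∑ v, f (set ω v)) := by
  rw [group_sum get set hgs hsg hss d f]
  exact Finset.sum_congr rfl fun ω _ => (ind_eq_ite _).symm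

lemma step_sum' (get : Ω → V) (set : Ω → V → Ω)
    (hgs : ∀ ω v, get (set ω v) = v)
    (hsg : ∀ ω, set ω (get ω) = ω)
    (hss : ∀ ω v w, set (set ω v) w = set ω w)
    (d : V) (C : Ω → Prop) (a b : Ω → ℝ)
    (hC : ∀ ω v, C (set ω v) ↔ C ω)
    (ha : ∀ ω v, a (set ω v) = a ω)
    (hb : ∀ ω, ∑ v, b (set ω v) = 1) :
    ∑ ω, ind (C ω) (a ω * b ω) = ∑ ω, ind (C ω ∧ get ω = d) (a ω) := by
  have h1 : ∀ ω, ind (C ω) (a ω * b ω) = if C ω then a ω * b ω else 0 :=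
    fun ω => ind_eq_ite _
  have h2 : ∀ ω, ind (C ω ∧ get ω = d) (a ω) = if C ω ∧ get ω = d then a ω else 0 :=
    fun ω => ind_eq_ite _
  simp only [h1, h2]
  exact step_sum get set hgs hsg hss d C a b hC ha hb

lemma repin_sum' (get : Ω → V) (set : Ω → V → Ω)
    (hgs : ∀ ω v, get (set ω v) = v)
    (hsg : ∀ ω, set ω (get ω) = ω)
    (hss : ∀ ω v w, set (set ω v) w = set ω w)
    (c₁ c₂ : V) (C : Ω → Prop) (a : Ω → ℝ)
    (hC : ∀ ω v, C (set ω v) ↔ C ω)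
    (ha : ∀ ω v, a (set ω v) = a ω) :
    ∑ ω, ind (C ω ∧ get ω = c₁) (a ω) = ∑ ω, ind (C ω ∧ get ω = c₂) (a ω) := by
  have h2 : ∀ (c : V) ω, ind (C ω ∧ get ω = c) (a ω) = if C ω ∧ get ω = c then a ω else 0 :=
    fun c ω => ind_eq_ite _
  simp only [h2]
  exact repin_sum get set hgs hsg hss c₁ c₂ C a hC ha

end Ind
section Machinery

variable {T : ℕ} {X Y Z S U : Type}

/-! #### Component setters on trajectories -/

def setXc (i : Fin T) (v : X) (ω : Traj T X Y Z S U) : Traj T X Y Z S U :=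
  (Function.update ω.1 i v, ω.2)
def setYc (i : Fin T) (v : Y) (ω : Traj T X Y Z S U) : Traj T X Y Z S U :=
  (ω.1, Function.update ω.2.1 i v, ω.2.2)
def setZc (i : Fin T) (v : Z) (ω : Traj T X Y Z S U) : Traj T X Y Z S U :=
  (ω.1, ω.2.1, Function.update ω.2.2.1 i v, ω.2.2.2)
def setSc (i : Fin T) (v : S) (ω : Traj T X Y Z S U) : Traj T X Y Z S U :=
  (ω.1, ω.2.1, ω.2.2.1, Function.update ω.2.2.2.1 i v, ω.2.2.2.2)
def setUc (i : Fin T) (v : U) (ω : Traj T X Y Z S U) : Traj T X Y Z S U :=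
  (ω.1, ω.2.1, ω.2.2.1, ω.2.2.2.1, Function.update ω.2.2.2.2 i v)

variable {i : Fin T} {ω : Traj T X Y Z S U}

@[simp] lemma trX_setXc (v : X) : trX (setXc i v ω) = Function.update (trX ω) i v := rfl
@[simp] lemma trY_setXc (v : X) : trY (setXc i v ω) = trY ω := rfl
@[simp] lemma trZ_setXc (v : X) : trZ (setXc i v ω) = trZ ω := rfl
@[simp] lemma trS_setXc (v : X) : trS (setXc i v ω) = trS ω := rfl
@[simp] lemma trU_setXc (v : X) : trU (setXc i v ω) = trU ω := rfl

@[simp] lemma trX_setYc (v : Y) : trX (setYc i v ω) = trX ω := rfl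
@[simp] lemma trY_setYc (v : Y) : trY (setYc i v ω) = Function.update (trY ω) i v := rfl
@[simp] lemma trZ_setYc (v : Y) : trZ (setYc i v ω) = trZ ω := rfl
@[simp] lemma trS_setYc (v : Y) : trS (setYc i v ω) = trS ω := rfl
@[simp] lemma trU_setYc (v : Y) : trU (setYc i v ω) = trU ω := rfl

@[simp] lemma trX_setZc (v : Z) : trX (setZc i v ω) = trX ω := rfl
@[simp] lemma trY_setZc (v : Z) : trY (setZc i v ω) = trY ω := rfl
@[simp] lemma trZ_setZc (v : Z) : trZ (setZc i v ω) = Function.update (trZ ω) i v := rfl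
@[simp] lemma trS_setZc (v : Z) : trS (setZc i v ω) = trS ω := rfl
@[simp] lemma trU_setZc (v : Z) : trU (setZc i v ω) = trU ω := rfl

@[simp] lemma trX_setSc (v : S) : trX (setSc i v ω) = trX ω := rfl
@[simp] lemma trY_setSc (v : S) : trY (setSc i v ω) = trY ω := rfl
@[simp] lemma trZ_setSc (v : S) : trZ (setSc i v ω) = trZ ω := rfl
@[simp] lemma trS_setSc (v : S) : trS (setSc i v ω) = Function.update (trS ω) i v := rfl
@[simp] lemma trU_setSc (v : S) : trU (setSc i v ω) = trU ω := rfl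

@[simp] lemma trX_setUc (v : U) : trX (setUc i v ω) = trX ω := rfl
@[simp] lemma trY_setUc (v : U) : trY (setUc i v ω) = trY ω := rfl
@[simp] lemma trZ_setUc (v : U) : trZ (setUc i v ω) = trZ ω := rfl
@[simp] lemma trS_setUc (v : U) : trS (setUc i v ω) = trS ω := rfl
@[simp] lemma trU_setUc (v : U) : trU (setUc i v ω) = Function.update (trU ω) i v := rfl

lemma gsX : ∀ (ω : Traj T X Y Z S U) (v : X), trX (setXc i v ω) i = v := by
  intro ω v; simp
lemma sgX : ∀ (ω : Traj T X Y Z S U), setXc i (trX ω i) ω = ω := by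
  intro ω; simp [setXc, trX]
lemma ssX : ∀ (ω : Traj T X Y Z S U) (v w : X), setXc i w (setXc i v ω) = setXc i w ω := by
  intro ω v w; simp [setXc, Function.update_idem]

lemma gsY : ∀ (ω : Traj T X Y Z S U) (v : Y), trY (setYc i v ω) i = v := by
  intro ω v; simp
lemma sgY : ∀ (ω : Traj T X Y Z S U), setYc i (trY ω i) ω = ω := by
  intro ω; simp [setYc, trY]
lemma ssY : ∀ (ω : Traj T X Y Z S U) (v w : Y), setYc i w (setYc i v ω) = setYc i w ω := by
  intro ω v w; simp [setYc, Function.update_idem]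

lemma gsZ : ∀ (ω : Traj T X Y Z S U) (v : Z), trZ (setZc i v ω) i = v := by
  intro ω v; simp
lemma sgZ : ∀ (ω : Traj T X Y Z S U), setZc i (trZ ω i) ω = ω := by
  intro ω; simp [setZc, trZ]
lemma ssZ : ∀ (ω : Traj T X Y Z S U) (v w : Z), setZc i w (setZc i v ω) = setZc i w ω := by
  intro ω v w; simp [setZc, Function.update_idem]

lemma gsS : ∀ (ω : Traj T X Y Z S U) (v : S), trS (setSc i v ω) i = v := by
  intro ω v; simp
lemma sgS : ∀ (ω : Traj T X Y Z S U), setSc i (trS ω i) ω = ω := by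
  intro ω; simp [setSc, trS]
lemma ssS : ∀ (ω : Traj T X Y Z S U) (v w : S), setSc i w (setSc i v ω) = setSc i w ω := by
  intro ω v w; simp [setSc, Function.update_idem]

lemma gsU : ∀ (ω : Traj T X Y Z S U) (v : U), trU (setUc i v ω) i = v := by
  intro ω v; simp
lemma sgU : ∀ (ω : Traj T X Y Z S U), setUc i (trU ω i) ω = ω := by
  intro ω; simp [setUc, trU]
lemma ssU : ∀ (ω : Traj T X Y Z S U) (v w : U), setUc i w (setUc i v ω) = setUc i w ω := by
  intro ω v w; simp [setUc, Function.update_idem]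

/-! #### History-update lemmas -/

lemma hist_update_of_le {A : Type} {g : Fin T → A} {j : Fin T} (h : j.1 ≤ i.1) (v : A) :
    hist (Function.update g i v) j = hist g j := by
  funext k
  have hk := k.2
  exact Function.update_of_ne (Fin.ne_of_val_ne (show k.1 ≠ i.1 by omega)) _ _

lemma histIncl_update_of_lt {A : Type} {g : Fin T → A} {j : Fin T} (h : j.1 < i.1) (v : A) :
    histIncl (Function.update g i v) j = histIncl g j := by
  funext k
  have hk := k.2
  exact Function.update_of_ne (Fin.ne_of_val_ne (show k.1 ≠ i.1 by omega)) _ _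

lemma update_apply_of_ne {A : Type} {g : Fin T → A} {j : Fin T} (h : j ≠ i) (v : A) :
    Function.update g i v j = g j :=
  Function.update_of_ne h _ _

lemma prevO_update_of_le {A : Type} {g : Fin T → A} {j : Fin T} (h : j.1 ≤ i.1) (v : A) :
    prevO (Function.update g i v) j = prevO g j := by
  unfold prevO
  by_cases h0 : j.1 = 0
  · simp [h0]
  · simp only [h0, if_false]
    congr 1
    exact Function.update_of_ne (Fin.ne_of_val_ne (show j.1 - 1 ≠ i.1 by omega)) _ _

lemma prev3_update_x {x : Fin T → X} {y : Fin T → Y} {u : Fin T → U} {j : Fin T}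
    (h : j.1 ≤ i.1) (v : X) :
    prev3 (Function.update x i v) y u j = prev3 x y u j := by
  unfold prev3
  by_cases h0 : j.1 = 0
  · simp [h0]
  · simp only [h0, if_false]
    congr 2
    exact Function.update_of_ne (Fin.ne_of_val_ne (show j.1 - 1 ≠ i.1 by omega)) _ _

lemma prev3_update_y {x : Fin T → X} {y : Fin T → Y} {u : Fin T → U} {j : Fin T}
    (h : j.1 ≤ i.1) (v : Y) :
    prev3 x (Function.update y i v) u j = prev3 x y u j := by
  unfold prev3
  by_cases h0 : j.1 = 0
  · simp [h0]
  · simp only [h0, if_false]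
    congr 3
    exact Function.update_of_ne (Fin.ne_of_val_ne (show j.1 - 1 ≠ i.1 by omega)) _ _

lemma prev3_update_u {x : Fin T → X} {y : Fin T → Y} {u : Fin T → U} {j : Fin T}
    (h : j.1 ≤ i.1) (v : U) :
    prev3 x y (Function.update u i v) j = prev3 x y u j := by
  unfold prev3
  by_cases h0 : j.1 = 0
  · simp [h0]
  · simp only [h0, if_false]
    congr 3
    exact Function.update_of_ne (Fin.ne_of_val_ne (show j.1 - 1 ≠ i.1 by omega)) _ _

/-! #### Decomposition of inclusive histories -/

lemma histIncl_eq_iff {A : Type} {g : Fin T → A} {j : Fin T} {h : Fin (j.1 + 1) → A} :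
    histIncl g j = h ↔ hist g j = trunc h ∧ g j = h (Fin.last j.1) := by
  constructor
  · rintro rfl
    exact ⟨rfl, rfl⟩
  · rintro ⟨h1, h2⟩
    funext k
    by_cases hk : k.1 = j.1
    · have hkl : k = Fin.last j.1 := Fin.ext hk
      rw [hkl]
      exact h2
    · have hk' : k.1 < j.1 := by have := k.2; omega
      have e1 : histIncl g j k = hist g j ⟨k.1, hk'⟩ := rfl
      rw [e1, h1]
      rfl

lemma hist_succ_eq_histIncl {A : Type} {g : Fin T → A} {j : Fin T} (hj : j.1 + 1 < T) :
    hist g ⟨j.1 + 1, hj⟩ = histIncl g j := rfl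

end Machinery
set_option linter.unusedSectionVars false
section Factors

variable {T : ℕ} {X Y Z S U : Type} [Fintype X] [Fintype Y] [Fintype Z] [Fintype S] [Fintype U]
variable (K : Kernels X Y Z U) (πe : QPol T Z S U) (πc : CPol T S U)

def fyf : Fin T → Traj T X Y Z S U → ℝ := fun r ω => K.PY (prevO (trY ω) r) (trY ω r)
def fxf : Fin T → Traj T X Y Z S U → ℝ :=
  fun r ω => K.PX (prev3 (trX ω) (trY ω) (trU ω) r) (trX ω r)
def fzf : Fin T → Traj T X Y Z S U → ℝ := fun r ω => K.PZ (trX ω r) (trZ ω r)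
def fsf : Fin T → Traj T X Y Z S U → ℝ :=
  fun r ω => πe r (histIncl (trZ ω) r) (hist (trS ω) r) (hist (trU ω) r) (trS ω r)
def fuf : Fin T → Traj T X Y Z S U → ℝ :=
  fun r ω => πc r (histIncl (trS ω) r) (hist (trU ω) r) (trU ω r)
def fAll : Fin T → Traj T X Y Z S U → ℝ :=
  fun r ω => fyf K r ω * fxf K r ω * fzf K r ω * fsf πe r ω * fuf πc r ω

lemma joint_eq_prod (ω : Traj T X Y Z S U) :
    joint K πe πc ω = ∏ r, fAll K πe πc r ω := by
  obtain ⟨x, y, z, s, u⟩ := ω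
  rfl

def Iprod (n : ℕ) (ω : Traj T X Y Z S U) : ℝ :=
  ∏ r ∈ Finset.univ.filter (fun r : Fin T => r.1 < n), fAll K πe πc r ω

lemma Iprod_T (ω : Traj T X Y Z S U) : Iprod K πe πc T ω = joint K πe πc ω := by
  rw [joint_eq_prod]
  unfold Iprod
  congr 1
  exact Finset.filter_true_of_mem fun r _ => r.2

lemma Iprod_succ {n : ℕ} (hn : n < T) (ω : Traj T X Y Z S U) :
    Iprod K πe πc (n + 1) ω = Iprod K πe πc n ω * fAll K πe πc ⟨n, hn⟩ ω := by
  unfold Iprod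
  have hset : Finset.univ.filter (fun r : Fin T => r.1 < n + 1)
      = insert ⟨n, hn⟩ (Finset.univ.filter (fun r : Fin T => r.1 < n)) := by
    ext r
    simp only [Finset.mem_filter, Finset.mem_univ, true_and, Finset.mem_insert, Fin.ext_iff]
    omega
  rw [hset, Finset.prod_insert (by simp)]
  ring

/-! #### Invariance of the factors under setters -/

variable {i : Fin T} {r : Fin T}

lemma fyf_setXc (v : X) (ω : Traj T X Y Z S U) : fyf K r (setXc i v ω) = fyf K r ω := rfl
lemma fyf_setZc (v : Z) (ω : Traj T X Y Z S U) : fyf K r (setZc i v ω) = fyf K r ω := rfl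
lemma fyf_setSc (v : S) (ω : Traj T X Y Z S U) : fyf K r (setSc i v ω) = fyf K r ω := rfl
lemma fyf_setUc (v : U) (ω : Traj T X Y Z S U) : fyf K r (setUc i v ω) = fyf K r ω := rfl
lemma fyf_setYc (h : r.1 < i.1) (v : Y) (ω : Traj T X Y Z S U) :
    fyf K r (setYc i v ω) = fyf K r ω := by
  unfold fyf
  rw [trY_setYc, prevO_update_of_le (le_of_lt h),
    Function.update_of_ne (Fin.ne_of_val_ne (show r.1 ≠ i.1 by omega))]

lemma fxf_setZc (v : Z) (ω : Traj T X Y Z S U) : fxf K r (setZc i v ω) = fxf K r ω := rfl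
lemma fxf_setSc (v : S) (ω : Traj T X Y Z S U) : fxf K r (setSc i v ω) = fxf K r ω := rfl
lemma fxf_setXc (h : r.1 < i.1) (v : X) (ω : Traj T X Y Z S U) :
    fxf K r (setXc i v ω) = fxf K r ω := by
  unfold fxf
  rw [trX_setXc, trY_setXc, trU_setXc, prev3_update_x (le_of_lt h),
    Function.update_of_ne (Fin.ne_of_val_ne (show r.1 ≠ i.1 by omega))]
lemma fxf_setYc_of_le (h : r.1 ≤ i.1) (v : Y) (ω : Traj T X Y Z S U) :
    fxf K r (setYc i v ω) = fxf K r ω := by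
  unfold fxf
  rw [trX_setYc, trY_setYc, trU_setYc, prev3_update_y h]
lemma fxf_setUc_of_le (h : r.1 ≤ i.1) (v : U) (ω : Traj T X Y Z S U) :
    fxf K r (setUc i v ω) = fxf K r ω := by
  unfold fxf
  rw [trX_setUc, trY_setUc, trU_setUc, prev3_update_u h]

lemma fzf_setYc (v : Y) (ω : Traj T X Y Z S U) : fzf K r (setYc i v ω) = fzf K r ω := rfl
lemma fzf_setSc (v : S) (ω : Traj T X Y Z S U) : fzf K r (setSc i v ω) = fzf K r ω := rfl
lemma fzf_setUc (v : U) (ω : Traj T X Y Z S U) : fzf K r (setUc i v ω) = fzf K r ω := rfl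
lemma fzf_setXc (h : r.1 < i.1) (v : X) (ω : Traj T X Y Z S U) :
    fzf K r (setXc i v ω) = fzf K r ω := by
  unfold fzf
  rw [trX_setXc, trZ_setXc,
    Function.update_of_ne (Fin.ne_of_val_ne (show r.1 ≠ i.1 by omega))]
lemma fzf_setZc (h : r.1 < i.1) (v : Z) (ω : Traj T X Y Z S U) :
    fzf K r (setZc i v ω) = fzf K r ω := by
  unfold fzf
  rw [trX_setZc, trZ_setZc,
    Function.update_of_ne (Fin.ne_of_val_ne (show r.1 ≠ i.1 by omega))]

lemma fsf_setXc (v : X) (ω : Traj T X Y Z S U) : fsf πe r (setXc i v ω) = fsf πe r ω := rfl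
lemma fsf_setYc (v : Y) (ω : Traj T X Y Z S U) : fsf πe r (setYc i v ω) = fsf πe r ω := rfl
lemma fsf_setZc (h : r.1 < i.1) (v : Z) (ω : Traj T X Y Z S U) :
    fsf πe r (setZc i v ω) = fsf πe r ω := by
  unfold fsf
  rw [trZ_setZc, trS_setZc, trU_setZc, histIncl_update_of_lt h]
lemma fsf_setSc (h : r.1 < i.1) (v : S) (ω : Traj T X Y Z S U) :
    fsf πe r (setSc i v ω) = fsf πe r ω := by
  unfold fsf
  rw [trZ_setSc, trS_setSc, trU_setSc, hist_update_of_le (le_of_lt h),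
    Function.update_of_ne (Fin.ne_of_val_ne (show r.1 ≠ i.1 by omega))]
lemma fsf_setUc_of_le (h : r.1 ≤ i.1) (v : U) (ω : Traj T X Y Z S U) :
    fsf πe r (setUc i v ω) = fsf πe r ω := by
  unfold fsf
  rw [trZ_setUc, trS_setUc, trU_setUc, hist_update_of_le h]

lemma fuf_setXc (v : X) (ω : Traj T X Y Z S U) : fuf πc r (setXc i v ω) = fuf πc r ω := rfl
lemma fuf_setYc (v : Y) (ω : Traj T X Y Z S U) : fuf πc r (setYc i v ω) = fuf πc r ω := rfl
lemma fuf_setZc (v : Z) (ω : Traj T X Y Z S U) : fuf πc r (setZc i v ω) = fuf πc r ω := rfl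
lemma fuf_setSc (h : r.1 < i.1) (v : S) (ω : Traj T X Y Z S U) :
    fuf πc r (setSc i v ω) = fuf πc r ω := by
  unfold fuf
  rw [trS_setSc, trU_setSc, histIncl_update_of_lt h]
lemma fuf_setUc (h : r.1 < i.1) (v : U) (ω : Traj T X Y Z S U) :
    fuf πc r (setUc i v ω) = fuf πc r ω := by
  unfold fuf
  rw [trS_setUc, trU_setUc, hist_update_of_le (le_of_lt h),
    Function.update_of_ne (Fin.ne_of_val_ne (show r.1 ≠ i.1 by omega))]

lemma fAll_setXc (h : r.1 < i.1) (v : X) (ω : Traj T X Y Z S U) :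
    fAll K πe πc r (setXc i v ω) = fAll K πe πc r ω := by
  unfold fAll
  rw [fyf_setXc, fxf_setXc K h, fzf_setXc K h, fsf_setXc, fuf_setXc]
lemma fAll_setYc (h : r.1 < i.1) (v : Y) (ω : Traj T X Y Z S U) :
    fAll K πe πc r (setYc i v ω) = fAll K πe πc r ω := by
  unfold fAll
  rw [fyf_setYc K h, fxf_setYc_of_le K (le_of_lt h), fzf_setYc, fsf_setYc, fuf_setYc]
lemma fAll_setZc (h : r.1 < i.1) (v : Z) (ω : Traj T X Y Z S U) :
    fAll K πe πc r (setZc i v ω) = fAll K πe πc r ω := by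
  unfold fAll
  rw [fyf_setZc, fxf_setZc, fzf_setZc K h, fsf_setZc πe h, fuf_setZc]
lemma fAll_setSc (h : r.1 < i.1) (v : S) (ω : Traj T X Y Z S U) :
    fAll K πe πc r (setSc i v ω) = fAll K πe πc r ω := by
  unfold fAll
  rw [fyf_setSc, fxf_setSc, fzf_setSc, fsf_setSc πe h, fuf_setSc πc h]
lemma fAll_setUc (h : r.1 < i.1) (v : U) (ω : Traj T X Y Z S U) :
    fAll K πe πc r (setUc i v ω) = fAll K πe πc r ω := by
  unfold fAll
  rw [fyf_setUc, fxf_setUc_of_le K (le_of_lt h), fzf_setUc,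
    fsf_setUc_of_le πe (le_of_lt h), fuf_setUc πc h]

lemma Iprod_setXc {n : ℕ} (h : n ≤ i.1) (v : X) (ω : Traj T X Y Z S U) :
    Iprod K πe πc n (setXc i v ω) = Iprod K πe πc n ω :=
  Finset.prod_congr rfl fun r hr => fAll_setXc K πe πc
    (by simp only [Finset.mem_filter] at hr; omega) v ω
lemma Iprod_setYc {n : ℕ} (h : n ≤ i.1) (v : Y) (ω : Traj T X Y Z S U) :
    Iprod K πe πc n (setYc i v ω) = Iprod K πe πc n ω :=
  Finset.prod_congr rfl fun r hr => fAll_setYc K πe πc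
    (by simp only [Finset.mem_filter] at hr; omega) v ω
lemma Iprod_setZc {n : ℕ} (h : n ≤ i.1) (v : Z) (ω : Traj T X Y Z S U) :
    Iprod K πe πc n (setZc i v ω) = Iprod K πe πc n ω :=
  Finset.prod_congr rfl fun r hr => fAll_setZc K πe πc
    (by simp only [Finset.mem_filter] at hr; omega) v ω
lemma Iprod_setSc {n : ℕ} (h : n ≤ i.1) (v : S) (ω : Traj T X Y Z S U) :
    Iprod K πe πc n (setSc i v ω) = Iprod K πe πc n ω :=
  Finset.prod_congr rfl fun r hr => fAll_setSc K πe πc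
    (by simp only [Finset.mem_filter] at hr; omega) v ω
lemma Iprod_setUc {n : ℕ} (h : n ≤ i.1) (v : U) (ω : Traj T X Y Z S U) :
    Iprod K πe πc n (setUc i v ω) = Iprod K πe πc n ω :=
  Finset.prod_congr rfl fun r hr => fAll_setUc K πe πc
    (by simp only [Finset.mem_filter] at hr; omega) v ω

/-! #### Sum-to-one lemmas -/

lemma sum_fyf (m : Fin T) (ω : Traj T X Y Z S U) :
    ∑ v, fyf K m (setYc m v ω) = 1 := by
  have h : ∀ v, fyf K m (setYc m v ω) = K.PY (prevO (trY ω) m) v := by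
    intro v
    unfold fyf
    rw [trY_setYc, prevO_update_of_le le_rfl, Function.update_self]
  simp only [h]
  exact K.PY_sum _

lemma sum_fxf (m : Fin T) (ω : Traj T X Y Z S U) :
    ∑ v, fxf K m (setXc m v ω) = 1 := by
  have h : ∀ v, fxf K m (setXc m v ω)
      = K.PX (prev3 (trX ω) (trY ω) (trU ω) m) v := by
    intro v
    unfold fxf
    rw [trX_setXc, trY_setXc, trU_setXc, prev3_update_x le_rfl, Function.update_self]
  simp only [h]
  exact K.PX_sum _

lemma sum_fzf (m : Fin T) (ω : Traj T X Y Z S U) :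
    ∑ v, fzf K m (setZc m v ω) = 1 := by
  have h : ∀ v, fzf K m (setZc m v ω) = K.PZ (trX ω m) v := by
    intro v
    unfold fzf
    rw [trX_setZc, trZ_setZc, Function.update_self]
  simp only [h]
  exact K.PZ_sum _

lemma sum_fsf (hπe : IsQPol πe) (m : Fin T) (ω : Traj T X Y Z S U) :
    ∑ v, fsf πe m (setSc m v ω) = 1 := by
  have h : ∀ v, fsf πe m (setSc m v ω)
      = πe m (histIncl (trZ ω) m) (hist (trS ω) m) (hist (trU ω) m) v := by
    intro v
    unfold fsf
    rw [trZ_setSc, trS_setSc, trU_setSc, hist_update_of_le le_rfl, Function.update_self]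
  simp only [h]
  exact hπe.2 m _ _ _

lemma sum_fuf (hπc : IsCPol πc) (m : Fin T) (ω : Traj T X Y Z S U) :
    ∑ v, fuf πc m (setUc m v ω) = 1 := by
  have h : ∀ v, fuf πc m (setUc m v ω)
      = πc m (histIncl (trS ω) m) (hist (trU ω) m) v := by
    intro v
    unfold fuf
    rw [trS_setUc, trU_setUc, hist_update_of_le le_rfl, Function.update_self]
  simp only [h]
  exact hπc.2 m _ _

/-! #### The pinned-suffix predicate -/

def Pin (δ : X × Y × Z × S × U) (n : ℕ) (ω : Traj T X Y Z S U) : Prop :=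
  ∀ r : Fin T, n ≤ r.1 →
    trX ω r = δ.1 ∧ trY ω r = δ.2.1 ∧ trZ ω r = δ.2.2.1 ∧
    trS ω r = δ.2.2.2.1 ∧ trU ω r = δ.2.2.2.2

variable {δ : X × Y × Z × S × U} {n : ℕ}

lemma Pin_top (ω : Traj T X Y Z S U) : Pin δ T ω :=
  fun r hr => absurd r.2 (Nat.not_lt.mpr hr)

lemma Pin_setXc (h : i.1 < n) (v : X) (ω : Traj T X Y Z S U) :
    Pin δ n (setXc i v ω) ↔ Pin δ n ω := by
  unfold Pin
  refine forall_congr' fun r => imp_congr_right fun hr => ?_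
  rw [trX_setXc, trY_setXc, trZ_setXc, trS_setXc, trU_setXc,
    Function.update_of_ne (Fin.ne_of_val_ne (show r.1 ≠ i.1 by omega))]

lemma Pin_setYc (h : i.1 < n) (v : Y) (ω : Traj T X Y Z S U) :
    Pin δ n (setYc i v ω) ↔ Pin δ n ω := by
  unfold Pin
  refine forall_congr' fun r => imp_congr_right fun hr => ?_
  rw [trX_setYc, trY_setYc, trZ_setYc, trS_setYc, trU_setYc,
    Function.update_of_ne (Fin.ne_of_val_ne (show r.1 ≠ i.1 by omega))]

lemma Pin_setZc (h : i.1 < n) (v : Z) (ω : Traj T X Y Z S U) :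
    Pin δ n (setZc i v ω) ↔ Pin δ n ω := by
  unfold Pin
  refine forall_congr' fun r => imp_congr_right fun hr => ?_
  rw [trX_setZc, trY_setZc, trZ_setZc, trS_setZc, trU_setZc,
    Function.update_of_ne (Fin.ne_of_val_ne (show r.1 ≠ i.1 by omega))]

lemma Pin_setSc (h : i.1 < n) (v : S) (ω : Traj T X Y Z S U) :
    Pin δ n (setSc i v ω) ↔ Pin δ n ω := by
  unfold Pin
  refine forall_congr' fun r => imp_congr_right fun hr => ?_
  rw [trX_setSc, trY_setSc, trZ_setSc, trS_setSc, trU_setSc,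
    Function.update_of_ne (Fin.ne_of_val_ne (show r.1 ≠ i.1 by omega))]

lemma Pin_setUc (h : i.1 < n) (v : U) (ω : Traj T X Y Z S U) :
    Pin δ n (setUc i v ω) ↔ Pin δ n ω := by
  unfold Pin
  refine forall_congr' fun r => imp_congr_right fun hr => ?_
  rw [trX_setUc, trY_setUc, trZ_setUc, trS_setUc, trU_setUc,
    Function.update_of_ne (Fin.ne_of_val_ne (show r.1 ≠ i.1 by omega))]

lemma Pin_succ_iff (hn : n < T) (ω : Traj T X Y Z S U) :
    Pin δ n ω ↔ Pin δ (n + 1) ω ∧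
      trX ω ⟨n, hn⟩ = δ.1 ∧ trY ω ⟨n, hn⟩ = δ.2.1 ∧ trZ ω ⟨n, hn⟩ = δ.2.2.1 ∧
      trS ω ⟨n, hn⟩ = δ.2.2.2.1 ∧ trU ω ⟨n, hn⟩ = δ.2.2.2.2 := by
  constructor
  · intro H
    exact ⟨fun r hr => H r (by omega), H ⟨n, hn⟩ (le_refl n)⟩
  · rintro ⟨H, h5⟩ r hr
    rcases eq_or_lt_of_le hr with he | hl
    · have hrn : r = ⟨n, hn⟩ := Fin.ext he.symm
      rw [hrn]
      exact h5
    · exact H r hl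

end Factors
set_option linter.unusedSectionVars false

section Marg

variable {T : ℕ} {X Y Z S U : Type} [Fintype X] [Fintype Y] [Fintype Z] [Fintype S] [Fintype U]
variable (K : Kernels X Y Z U) (πe : QPol T Z S U) (πc : CPol T S U)

/-- Sum out the `y`, `s`, `u` components at a single time `m`. -/
lemma consume3 (hπe : IsQPol πe) (hπc : IsCPol πc) (m : Fin T) (dy : Y) (ds : S) (du : U)
    (C : Traj T X Y Z S U → Prop) (g : Traj T X Y Z S U → ℝ)
    (hCY : ∀ ω v, C (setYc m v ω) ↔ C ω)
    (hCS : ∀ ω v, C (setSc m v ω) ↔ C ω)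
    (hCU : ∀ ω v, C (setUc m v ω) ↔ C ω)
    (hgY : ∀ ω v, g (setYc m v ω) = g ω)
    (hgS : ∀ ω v, g (setSc m v ω) = g ω)
    (hgU : ∀ ω v, g (setUc m v ω) = g ω) :
    ∑ ω, ind (C ω) (g ω * fAll K πe πc m ω)
      = ∑ ω, ind (C ω ∧ trY ω m = dy ∧ trS ω m = ds ∧ trU ω m = du)
          (g ω * fxf K m ω * fzf K m ω) := by
  calc ∑ ω, ind (C ω) (g ω * fAll K πe πc m ω)
      = ∑ ω, ind (C ω)
          ((g ω * fyf K m ω * fxf K m ω * fzf K m ω * fsf πe m ω) * fuf πc m ω) := by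
        refine Finset.sum_congr rfl fun ω _ => ind_congr Iff.rfl fun _ => ?_
        unfold fAll; ring
    _ = ∑ ω, ind (C ω ∧ trU ω m = du)
          (g ω * fyf K m ω * fxf K m ω * fzf K m ω * fsf πe m ω) :=
        step_sum' (fun ω => trU ω m) (fun ω v => setUc m v ω)
          (fun ω v => gsU ω v) (fun ω => sgU ω) (fun ω v w => ssU ω v w) du C
          (fun ω => g ω * fyf K m ω * fxf K m ω * fzf K m ω * fsf πe m ω) (fuf πc m)
          hCU
          (fun ω v => by
            show g (setUc m v ω) * fyf K m (setUc m v ω) * fxf K m (setUc m v ω) *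
                fzf K m (setUc m v ω) * fsf πe m (setUc m v ω)
              = g ω * fyf K m ω * fxf K m ω * fzf K m ω * fsf πe m ω
            rw [hgU, fyf_setUc, fxf_setUc_of_le K le_rfl, fzf_setUc,
              fsf_setUc_of_le πe le_rfl])
          (fun ω => sum_fuf πc hπc m ω)
    _ = ∑ ω, ind ((C ω ∧ trU ω m = du) ∧ trS ω m = ds)
          (g ω * fyf K m ω * fxf K m ω * fzf K m ω) :=
        step_sum' (fun ω => trS ω m) (fun ω v => setSc m v ω)
          (fun ω v => gsS ω v) (fun ω => sgS ω) (fun ω v w => ssS ω v w) ds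
          (fun ω => C ω ∧ trU ω m = du)
          (fun ω => g ω * fyf K m ω * fxf K m ω * fzf K m ω) (fsf πe m)
          (fun ω v => by
            show (C (setSc m v ω) ∧ trU (setSc m v ω) m = du) ↔ _
            rw [hCS, trU_setSc])
          (fun ω v => by
            show g (setSc m v ω) * fyf K m (setSc m v ω) * fxf K m (setSc m v ω) *
                fzf K m (setSc m v ω) = g ω * fyf K m ω * fxf K m ω * fzf K m ω
            rw [hgS, fyf_setSc, fxf_setSc, fzf_setSc])
          (fun ω => sum_fsf πe hπe m ω)
    _ = ∑ ω, ind ((C ω ∧ trU ω m = du) ∧ trS ω m = ds)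
          ((g ω * fxf K m ω * fzf K m ω) * fyf K m ω) := by
        refine Finset.sum_congr rfl fun ω _ => ind_congr Iff.rfl fun _ => by ring
    _ = ∑ ω, ind (((C ω ∧ trU ω m = du) ∧ trS ω m = ds) ∧ trY ω m = dy)
          (g ω * fxf K m ω * fzf K m ω) :=
        step_sum' (fun ω => trY ω m) (fun ω v => setYc m v ω)
          (fun ω v => gsY ω v) (fun ω => sgY ω) (fun ω v w => ssY ω v w) dy
          (fun ω => (C ω ∧ trU ω m = du) ∧ trS ω m = ds)
          (fun ω => g ω * fxf K m ω * fzf K m ω) (fyf K m)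
          (fun ω v => by
            show ((C (setYc m v ω) ∧ trU (setYc m v ω) m = du) ∧
              trS (setYc m v ω) m = ds) ↔ _
            rw [hCY, trU_setYc, trS_setYc])
          (fun ω v => by
            show g (setYc m v ω) * fxf K m (setYc m v ω) * fzf K m (setYc m v ω)
              = g ω * fxf K m ω * fzf K m ω
            rw [hgY, fxf_setYc_of_le K le_rfl, fzf_setYc])
          (fun ω => sum_fyf K m ω)
    _ = ∑ ω, ind (C ω ∧ trY ω m = dy ∧ trS ω m = ds ∧ trU ω m = du)
          (g ω * fxf K m ω * fzf K m ω) := by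
        refine Finset.sum_congr rfl fun ω _ => ind_congr (by tauto) fun _ => rfl

/-- Sum out the `x`, `z` components at a single time `m`. -/
lemma consume2 (m : Fin T) (dx : X) (dz : Z)
    (C : Traj T X Y Z S U → Prop) (g : Traj T X Y Z S U → ℝ)
    (hCX : ∀ ω v, C (setXc m v ω) ↔ C ω)
    (hCZ : ∀ ω v, C (setZc m v ω) ↔ C ω)
    (hgX : ∀ ω v, g (setXc m v ω) = g ω)
    (hgZ : ∀ ω v, g (setZc m v ω) = g ω) :
    ∑ ω, ind (C ω) (g ω * fxf K m ω * fzf K m ω)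
      = ∑ ω, ind (C ω ∧ trX ω m = dx ∧ trZ ω m = dz) (g ω) := by
  calc ∑ ω, ind (C ω) (g ω * fxf K m ω * fzf K m ω)
      = ∑ ω, ind (C ω) ((g ω * fxf K m ω) * fzf K m ω) := by
        refine Finset.sum_congr rfl fun ω _ => ind_congr Iff.rfl fun _ => by ring
    _ = ∑ ω, ind (C ω ∧ trZ ω m = dz) (g ω * fxf K m ω) :=
        step_sum' (fun ω => trZ ω m) (fun ω v => setZc m v ω)
          (fun ω v => gsZ ω v) (fun ω => sgZ ω) (fun ω v w => ssZ ω v w) dz C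
          (fun ω => g ω * fxf K m ω) (fzf K m)
          hCZ
          (fun ω v => by
            show g (setZc m v ω) * fxf K m (setZc m v ω) = g ω * fxf K m ω
            rw [hgZ, fxf_setZc])
          (fun ω => sum_fzf K m ω)
    _ = ∑ ω, ind ((C ω ∧ trZ ω m = dz) ∧ trX ω m = dx) (g ω) :=
        step_sum' (fun ω => trX ω m) (fun ω v => setXc m v ω)
          (fun ω v => gsX ω v) (fun ω => sgX ω) (fun ω v w => ssX ω v w) dx
          (fun ω => C ω ∧ trZ ω m = dz) g (fxf K m)
          (fun ω v => by
            show (C (setXc m v ω) ∧ trZ (setXc m v ω) m = dz) ↔ _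
            rw [hCX, trZ_setXc])
          (fun ω v => hgX ω v)
          (fun ω => sum_fxf K m ω)
    _ = ∑ ω, ind (C ω ∧ trX ω m = dx ∧ trZ ω m = dz) (g ω) := by
        refine Finset.sum_congr rfl fun ω _ => ind_congr (by tauto) fun _ => rfl

/-- Marginalization of the joint over all times `≥ n`. -/
lemma marg_aux (hπe : IsQPol πe) (hπc : IsCPol πc) (δ : X × Y × Z × S × U)
    (φ : Traj T X Y Z S U → ℝ) :
    ∀ (d n : ℕ), n + d = T →
    (∀ i : Fin T, n ≤ i.1 → ∀ ω v, φ (setXc i v ω) = φ ω) →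
    (∀ i : Fin T, n ≤ i.1 → ∀ ω v, φ (setYc i v ω) = φ ω) →
    (∀ i : Fin T, n ≤ i.1 → ∀ ω v, φ (setZc i v ω) = φ ω) →
    (∀ i : Fin T, n ≤ i.1 → ∀ ω v, φ (setSc i v ω) = φ ω) →
    (∀ i : Fin T, n ≤ i.1 → ∀ ω v, φ (setUc i v ω) = φ ω) →
    (∑ ω, φ ω * joint K πe πc ω)
      = ∑ ω, ind (Pin δ n ω) (φ ω * Iprod K πe πc n ω) := by
  intro d
  induction d with
  | zero =>
    intro n hn hX hY hZ hS hU
    have hnT : n = T := by omega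
    subst hnT
    refine Finset.sum_congr rfl fun ω _ => ?_
    rw [ind_of_pos (Pin_top ω), Iprod_T, joint_eq_prod]
  | succ d ih =>
    intro n hn hX hY hZ hS hU
    have hnT : n < T := by omega
    set m : Fin T := ⟨n, hnT⟩ with hm
    rw [ih (n + 1) (by omega)
      (fun i hi => hX i (by omega)) (fun i hi => hY i (by omega))
      (fun i hi => hZ i (by omega)) (fun i hi => hS i (by omega))
      (fun i hi => hU i (by omega))]
    have e1 : (∑ ω, ind (Pin δ (n+1) ω) (φ ω * Iprod K πe πc (n+1) ω))
        = ∑ ω, ind (Pin δ (n+1) ω)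
            ((fun ω => φ ω * Iprod K πe πc n ω) ω * fAll K πe πc m ω) := by
      refine Finset.sum_congr rfl fun ω _ => ind_congr Iff.rfl fun _ => ?_
      show φ ω * Iprod K πe πc (n+1) ω = φ ω * Iprod K πe πc n ω * fAll K πe πc m ω
      rw [Iprod_succ K πe πc hnT]
      ring
    rw [e1, consume3 K πe πc hπe hπc m δ.2.1 δ.2.2.2.1 δ.2.2.2.2 (Pin δ (n+1))
      (fun ω => φ ω * Iprod K πe πc n ω)
      (fun ω v => Pin_setYc (Nat.lt_succ_self n) v ω)
      (fun ω v => Pin_setSc (Nat.lt_succ_self n) v ω)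
      (fun ω v => Pin_setUc (Nat.lt_succ_self n) v ω)
      (fun ω v => by
        show φ (setYc m v ω) * Iprod K πe πc n (setYc m v ω) = φ ω * Iprod K πe πc n ω
        rw [hY m (le_refl n) ω v, Iprod_setYc K πe πc (le_refl n)])
      (fun ω v => by
        show φ (setSc m v ω) * Iprod K πe πc n (setSc m v ω) = φ ω * Iprod K πe πc n ω
        rw [hS m (le_refl n) ω v, Iprod_setSc K πe πc (le_refl n)])
      (fun ω v => by
        show φ (setUc m v ω) * Iprod K πe πc n (setUc m v ω) = φ ω * Iprod K πe πc n ω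
        rw [hU m (le_refl n) ω v, Iprod_setUc K πe πc (le_refl n)])]
    rw [consume2 K m δ.1 δ.2.2.1
      (fun ω => Pin δ (n+1) ω ∧ trY ω m = δ.2.1 ∧ trS ω m = δ.2.2.2.1 ∧ trU ω m = δ.2.2.2.2)
      (fun ω => φ ω * Iprod K πe πc n ω)
      (fun ω v => by
        show (Pin δ (n+1) (setXc m v ω) ∧ trY (setXc m v ω) m = δ.2.1 ∧
            trS (setXc m v ω) m = δ.2.2.2.1 ∧ trU (setXc m v ω) m = δ.2.2.2.2) ↔ _
        rw [Pin_setXc (Nat.lt_succ_self n) v ω, trY_setXc, trS_setXc, trU_setXc])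
      (fun ω v => by
        show (Pin δ (n+1) (setZc m v ω) ∧ trY (setZc m v ω) m = δ.2.1 ∧
            trS (setZc m v ω) m = δ.2.2.2.1 ∧ trU (setZc m v ω) m = δ.2.2.2.2) ↔ _
        rw [Pin_setZc (Nat.lt_succ_self n) v ω, trY_setZc, trS_setZc, trU_setZc])
      (fun ω v => by
        show φ (setXc m v ω) * Iprod K πe πc n (setXc m v ω) = φ ω * Iprod K πe πc n ω
        rw [hX m (le_refl n) ω v, Iprod_setXc K πe πc (le_refl n)])
      (fun ω v => by
        show φ (setZc m v ω) * Iprod K πe πc n (setZc m v ω) = φ ω * Iprod K πe πc n ω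
        rw [hZ m (le_refl n) ω v, Iprod_setZc K πe πc (le_refl n)])]
    refine Finset.sum_congr rfl fun ω _ => ind_congr ?_ fun _ => rfl
    rw [Pin_succ_iff hnT (δ := δ) ω]
    tauto

lemma marg (hπe : IsQPol πe) (hπc : IsCPol πc) (δ : X × Y × Z × S × U)
    (φ : Traj T X Y Z S U → ℝ) (n : ℕ) (hn : n ≤ T)
    (hX : ∀ i : Fin T, n ≤ i.1 → ∀ ω v, φ (setXc i v ω) = φ ω)
    (hY : ∀ i : Fin T, n ≤ i.1 → ∀ ω v, φ (setYc i v ω) = φ ω)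
    (hZ : ∀ i : Fin T, n ≤ i.1 → ∀ ω v, φ (setZc i v ω) = φ ω)
    (hS : ∀ i : Fin T, n ≤ i.1 → ∀ ω v, φ (setSc i v ω) = φ ω)
    (hU : ∀ i : Fin T, n ≤ i.1 → ∀ ω v, φ (setUc i v ω) = φ ω) :
    (∑ ω, φ ω * joint K πe πc ω)
      = ∑ ω, ind (Pin δ n ω) (φ ω * Iprod K πe πc n ω) :=
  marg_aux K πe πc hπe hπc δ φ (T - n) n (by omega) hX hY hZ hS hU

end Marg

section PrLemmas

variable {Ω : Type} [Fintype Ω]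

lemma pr_eq_sum_ind (P : Ω → ℝ) (E : Ω → Prop) :
    pr P E = ∑ ω, ind (E ω) 1 * P ω := by
  unfold pr
  refine Finset.sum_congr rfl fun ω _ => ?_
  by_cases h : E ω
  · rw [if_pos h, ind_of_pos h, one_mul]
  · rw [if_neg h, ind_of_neg h, zero_mul]

lemma pr_mono (P : Ω → ℝ) (h0 : ∀ ω, 0 ≤ P ω) (E F : Ω → Prop)
    (h : ∀ ω, E ω → F ω) : pr P E ≤ pr P F := by
  refine Finset.sum_le_sum fun ω _ => ?_
  by_cases hE : E ω
  · rw [if_pos hE, if_pos (h ω hE)]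
  · rw [if_neg hE]
    by_cases hF : F ω
    · rw [if_pos hF]; exact h0 ω
    · rw [if_neg hF]

lemma pr_partition {γ : Type} [Fintype γ] (P : Ω → ℝ) (G : Ω → γ) (F : Ω → Prop) :
    pr P F = ∑ c, pr P (fun ω => G ω = c ∧ F ω) := by
  unfold pr
  rw [Finset.sum_comm]
  refine Finset.sum_congr rfl fun ω _ => ?_
  by_cases hF : F ω
  · simp [hF, Finset.sum_ite_eq]
  · simp [hF]

lemma expand_sum {γ : Type} [Fintype γ] (G : Ω → γ) (h : Ω → ℝ) :
    ∑ ω, h ω = ∑ c, ∑ ω, ind (G ω = c) (h ω) := by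
  have e : ∀ c, (∑ ω, ind (G ω = c) (h ω)) = ∑ ω, if G ω = c then h ω else 0 :=
    fun c => Finset.sum_congr rfl fun ω _ => ind_eq_ite _
  simp only [e]
  rw [Finset.sum_comm]
  refine Finset.sum_congr rfl fun ω _ => ?_
  simp [Finset.sum_ite_eq]

end PrLemmas

section JointNonneg

variable {T : ℕ} {X Y Z S U : Type} [Fintype X] [Fintype Y] [Fintype Z] [Fintype S] [Fintype U]

lemma joint_nonneg (K : Kernels X Y Z U) (πe : QPol T Z S U) (πc : CPol T S U)
    (hπe : IsQPol πe) (hπc : IsCPol πc) (ω : Traj T X Y Z S U) :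
    0 ≤ joint K πe πc ω := by
  rw [joint_eq_prod]
  refine Finset.prod_nonneg fun r _ => ?_
  unfold fAll fyf fxf fzf fsf fuf
  have h1 := K.PY_nonneg (prevO (trY ω) r) (trY ω r)
  have h2 := K.PX_nonneg (prev3 (trX ω) (trY ω) (trU ω) r) (trX ω r)
  have h3 := K.PZ_nonneg (trX ω r) (trZ ω r)
  have h4 := hπe.1 r (histIncl (trZ ω) r) (hist (trS ω) r) (hist (trU ω) r) (trS ω r)
  have h5 := hπc.1 r (histIncl (trS ω) r) (hist (trU ω) r) (trU ω r)
  positivity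

end JointNonneg
section Main

set_option maxHeartbeats 1000000

variable {T : ℕ} {X Y Z S U : Type} [Fintype X] [Fintype Y] [Fintype Z] [Fintype S] [Fintype U]
variable (K : Kernels X Y Z U) (πe : QPol T Z S U) (πc : CPol T S U)
variable (t : Fin T) (ht : t.1 + 1 < T)
variable (sI : Fin (t.1 + 1) → S) (uI : Fin (t.1 + 1) → U)
variable (δ : X × Y × Z × S × U)

lemma ind_ind (P Q : Prop) (x : ℝ) : ind P (ind Q x) = ind (Q ∧ P) x := by
  by_cases hP : P
  · by_cases hQ : Q
    · rw [ind_of_pos hP, ind_of_pos hQ, ind_of_pos ⟨hQ, hP⟩]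
    · rw [ind_of_pos hP, ind_of_neg hQ, ind_of_neg (fun h => hQ h.1)]
  · by_cases hQ : Q
    · rw [ind_of_neg hP, ind_of_neg (fun h => hP h.2)]
    · rw [ind_of_neg hP, ind_of_neg (fun h => hP h.2)]

lemma ind_mul_ind (P Q : Prop) (x : ℝ) : ind P (ind Q 1 * x) = ind (Q ∧ P) x := by
  by_cases hP : P
  · by_cases hQ : Q
    · rw [ind_of_pos hP, ind_of_pos hQ, ind_of_pos ⟨hQ, hP⟩, one_mul]
    · rw [ind_of_pos hP, ind_of_neg hQ, ind_of_neg (fun h => hQ h.1), zero_mul]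
  · by_cases hQ : Q
    · rw [ind_of_neg hP, ind_of_neg (fun h => hP h.2)]
    · rw [ind_of_neg hP, ind_of_neg (fun h => hP h.2)]

lemma forall_update_iff' {A : Type} (g : Fin T → A) (i : Fin T) (v : A) (n : ℕ)
    (hn : i.1 < n) (c : A) :
    (∀ r : Fin T, n ≤ r.1 → Function.update g i v r = c)
      ↔ (∀ r : Fin T, n ≤ r.1 → g r = c) := by
  refine forall_congr' fun r => imp_congr_right fun hr => ?_
  rw [Function.update_of_ne (Fin.ne_of_val_ne (show r.1 ≠ i.1 by omega))]

/-- Canonical shared part of the pinned conditions. -/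
def CoreP (x : X) (yp : Fin t.1 → Y) (zp : Fin (t.1 + 1) → Z)
    (ω : Traj T X Y Z S U) : Prop :=
  (trX ω t = x ∧ ∀ r : Fin T, t.1 + 2 ≤ r.1 → trX ω r = δ.1) ∧
  (hist (trY ω) t = yp ∧ ∀ r : Fin T, t.1 + 1 ≤ r.1 → trY ω r = δ.2.1) ∧
  (histIncl (trZ ω) t = zp ∧ ∀ r : Fin T, t.1 + 2 ≤ r.1 → trZ ω r = δ.2.2.1) ∧
  (hist (trS ω) t = trunc sI ∧ ∀ r : Fin T, t.1 + 1 ≤ r.1 → trS ω r = δ.2.2.2.1) ∧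
  (hist (trU ω) t = trunc uI ∧ ∀ r : Fin T, t.1 + 1 ≤ r.1 → trU ω r = δ.2.2.2.2)

/-- Canonical pinned condition with residual values at the five free slots. -/
def PinsP (px : X) (py : Y) (pz : Z) (ps : S) (pu : U)
    (x : X) (yp : Fin t.1 → Y) (zp : Fin (t.1 + 1) → Z) (ω : Traj T X Y Z S U) : Prop :=
  CoreP t sI uI δ x yp zp ω ∧ trX ω ⟨t.1 + 1, ht⟩ = px ∧ trY ω t = py ∧
    trZ ω ⟨t.1 + 1, ht⟩ = pz ∧ trS ω t = ps ∧ trU ω t = pu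

/-- The common integrand. -/
def gInt (ω : Traj T X Y Z S U) : ℝ :=
  Iprod K πe πc t.1 ω * fxf K t ω * fzf K t ω

/-- The fully reduced value of `pr (E ∧ F)`. -/
def Abar (x : X) (yp : Fin t.1 → Y) (zp : Fin (t.1 + 1) → Z) : ℝ :=
  ∑ ω, ind (PinsP t ht sI uI δ δ.1 δ.2.1 δ.2.2.1 δ.2.2.2.1 δ.2.2.2.2 x yp zp ω)
    (gInt K πe πc t ω)

variable {x : X} {yp : Fin t.1 → Y} {zp : Fin (t.1 + 1) → Z}

lemma CoreP_setXc' (v : X) (ω : Traj T X Y Z S U) :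
    CoreP t sI uI δ x yp zp (setXc ⟨t.1 + 1, ht⟩ v ω) ↔ CoreP t sI uI δ x yp zp ω := by
  unfold CoreP
  rw [trX_setXc, trY_setXc, trZ_setXc, trS_setXc, trU_setXc,
    Function.update_of_ne (Fin.ne_of_val_ne (show t.1 ≠ t.1 + 1 by omega)),
    forall_update_iff' (trX ω) _ v (t.1 + 2) (Nat.lt_succ_self (t.1 + 1))]

lemma CoreP_setYc (v : Y) (ω : Traj T X Y Z S U) :
    CoreP t sI uI δ x yp zp (setYc t v ω) ↔ CoreP t sI uI δ x yp zp ω := by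
  unfold CoreP
  rw [trX_setYc, trY_setYc, trZ_setYc, trS_setYc, trU_setYc,
    hist_update_of_le (le_refl t.1) v,
    forall_update_iff' (trY ω) _ v (t.1 + 1) (Nat.lt_succ_self t.1)]

lemma CoreP_setZc' (v : Z) (ω : Traj T X Y Z S U) :
    CoreP t sI uI δ x yp zp (setZc ⟨t.1 + 1, ht⟩ v ω) ↔ CoreP t sI uI δ x yp zp ω := by
  unfold CoreP
  rw [trX_setZc, trY_setZc, trZ_setZc, trS_setZc, trU_setZc,
    histIncl_update_of_lt (show t.1 < t.1 + 1 from Nat.lt_succ_self t.1) v,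
    forall_update_iff' (trZ ω) _ v (t.1 + 2) (Nat.lt_succ_self (t.1 + 1))]

lemma CoreP_setSc (v : S) (ω : Traj T X Y Z S U) :
    CoreP t sI uI δ x yp zp (setSc t v ω) ↔ CoreP t sI uI δ x yp zp ω := by
  unfold CoreP
  rw [trX_setSc, trY_setSc, trZ_setSc, trS_setSc, trU_setSc,
    hist_update_of_le (le_refl t.1) v,
    forall_update_iff' (trS ω) _ v (t.1 + 1) (Nat.lt_succ_self t.1)]

lemma CoreP_setUc (v : U) (ω : Traj T X Y Z S U) :
    CoreP t sI uI δ x yp zp (setUc t v ω) ↔ CoreP t sI uI δ x yp zp ω := by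
  unfold CoreP
  rw [trX_setUc, trY_setUc, trZ_setUc, trS_setUc, trU_setUc,
    hist_update_of_le (le_refl t.1) v,
    forall_update_iff' (trU ω) _ v (t.1 + 1) (Nat.lt_succ_self t.1)]

lemma gInt_setXc' (v : X) (ω : Traj T X Y Z S U) :
    gInt K πe πc t (setXc ⟨t.1 + 1, ht⟩ v ω) = gInt K πe πc t ω := by
  unfold gInt
  rw [Iprod_setXc K πe πc (show t.1 ≤ t.1 + 1 from Nat.le_succ t.1),
    fxf_setXc K (Nat.lt_succ_self t.1), fzf_setXc K (Nat.lt_succ_self t.1)]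

lemma gInt_setYc (v : Y) (ω : Traj T X Y Z S U) :
    gInt K πe πc t (setYc t v ω) = gInt K πe πc t ω := by
  unfold gInt
  rw [Iprod_setYc K πe πc (le_refl t.1), fxf_setYc_of_le K (le_refl t.1), fzf_setYc]

lemma gInt_setZc' (v : Z) (ω : Traj T X Y Z S U) :
    gInt K πe πc t (setZc ⟨t.1 + 1, ht⟩ v ω) = gInt K πe πc t ω := by
  unfold gInt
  rw [Iprod_setZc K πe πc (show t.1 ≤ t.1 + 1 from Nat.le_succ t.1),
    fxf_setZc, fzf_setZc K (Nat.lt_succ_self t.1)]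

lemma gInt_setSc (v : S) (ω : Traj T X Y Z S U) :
    gInt K πe πc t (setSc t v ω) = gInt K πe πc t ω := by
  unfold gInt
  rw [Iprod_setSc K πe πc (le_refl t.1), fxf_setSc, fzf_setSc]

lemma gInt_setUc (v : U) (ω : Traj T X Y Z S U) :
    gInt K πe πc t (setUc t v ω) = gInt K πe πc t ω := by
  unfold gInt
  rw [Iprod_setUc K πe πc (le_refl t.1), fxf_setUc_of_le K (le_refl t.1), fzf_setUc]

/-- Repin all five residual slots to the default values. -/
lemma repin_all (px : X) (py : Y) (pz : Z) (ps : S) (pu : U) :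
    (∑ ω, ind (PinsP t ht sI uI δ px py pz ps pu x yp zp ω) (gInt K πe πc t ω))
      = Abar K πe πc t ht sI uI δ x yp zp := by
  have h5 : ∀ (a : X) (b : Y) (c : Z) (d : S) (e e' : U),
      (∑ ω, ind (PinsP t ht sI uI δ a b c d e x yp zp ω) (gInt K πe πc t ω))
        = ∑ ω, ind (PinsP t ht sI uI δ a b c d e' x yp zp ω) (gInt K πe πc t ω) := by
    intro a b c d e e'
    have hto : ∀ (q : U) ω, ind (PinsP t ht sI uI δ a b c d q x yp zp ω) (gInt K πe πc t ω)
        = ind ((CoreP t sI uI δ x yp zp ω ∧ trX ω ⟨t.1+1, ht⟩ = a ∧ trY ω t = b ∧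
            trZ ω ⟨t.1+1, ht⟩ = c ∧ trS ω t = d) ∧ trU ω t = q) (gInt K πe πc t ω) :=
      fun q ω => ind_congr (by unfold PinsP; tauto) fun _ => rfl
    simp only [hto]
    exact repin_sum' (fun ω => trU ω t) (fun ω v => setUc t v ω)
      (fun ω v => gsU ω v) (fun ω => sgU ω) (fun ω v w => ssU ω v w) e e' _ _
      (fun ω v => by
        show (CoreP t sI uI δ x yp zp (setUc t v ω) ∧ trX (setUc t v ω) ⟨t.1+1, ht⟩ = a ∧
          trY (setUc t v ω) t = b ∧ trZ (setUc t v ω) ⟨t.1+1, ht⟩ = c ∧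
          trS (setUc t v ω) t = d) ↔ _
        rw [CoreP_setUc, trX_setUc, trY_setUc, trZ_setUc, trS_setUc])
      (fun ω v => gInt_setUc K πe πc t v ω)
  have h4 : ∀ (a : X) (b : Y) (c : Z) (d d' : S) (e : U),
      (∑ ω, ind (PinsP t ht sI uI δ a b c d e x yp zp ω) (gInt K πe πc t ω))
        = ∑ ω, ind (PinsP t ht sI uI δ a b c d' e x yp zp ω) (gInt K πe πc t ω) := by
    intro a b c d d' e
    have hto : ∀ (q : S) ω, ind (PinsP t ht sI uI δ a b c q e x yp zp ω) (gInt K πe πc t ω)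
        = ind ((CoreP t sI uI δ x yp zp ω ∧ trX ω ⟨t.1+1, ht⟩ = a ∧ trY ω t = b ∧
            trZ ω ⟨t.1+1, ht⟩ = c ∧ trU ω t = e) ∧ trS ω t = q) (gInt K πe πc t ω) :=
      fun q ω => ind_congr (by unfold PinsP; tauto) fun _ => rfl
    simp only [hto]
    exact repin_sum' (fun ω => trS ω t) (fun ω v => setSc t v ω)
      (fun ω v => gsS ω v) (fun ω => sgS ω) (fun ω v w => ssS ω v w) d d' _ _
      (fun ω v => by
        show (CoreP t sI uI δ x yp zp (setSc t v ω) ∧ trX (setSc t v ω) ⟨t.1+1, ht⟩ = a ∧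
          trY (setSc t v ω) t = b ∧ trZ (setSc t v ω) ⟨t.1+1, ht⟩ = c ∧
          trU (setSc t v ω) t = e) ↔ _
        rw [CoreP_setSc, trX_setSc, trY_setSc, trZ_setSc, trU_setSc])
      (fun ω v => gInt_setSc K πe πc t v ω)
  have h3 : ∀ (a : X) (b : Y) (c c' : Z) (d : S) (e : U),
      (∑ ω, ind (PinsP t ht sI uI δ a b c d e x yp zp ω) (gInt K πe πc t ω))
        = ∑ ω, ind (PinsP t ht sI uI δ a b c' d e x yp zp ω) (gInt K πe πc t ω) := by
    intro a b c c' d e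
    have hto : ∀ (q : Z) ω, ind (PinsP t ht sI uI δ a b q d e x yp zp ω) (gInt K πe πc t ω)
        = ind ((CoreP t sI uI δ x yp zp ω ∧ trX ω ⟨t.1+1, ht⟩ = a ∧ trY ω t = b ∧
            trS ω t = d ∧ trU ω t = e) ∧ trZ ω ⟨t.1+1, ht⟩ = q) (gInt K πe πc t ω) :=
      fun q ω => ind_congr (by unfold PinsP; tauto) fun _ => rfl
    simp only [hto]
    exact repin_sum' (fun ω => trZ ω ⟨t.1+1, ht⟩) (fun ω v => setZc ⟨t.1+1, ht⟩ v ω)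
      (fun ω v => gsZ ω v) (fun ω => sgZ ω) (fun ω v w => ssZ ω v w) c c' _ _
      (fun ω v => by
        show (CoreP t sI uI δ x yp zp (setZc ⟨t.1+1, ht⟩ v ω) ∧
          trX (setZc ⟨t.1+1, ht⟩ v ω) ⟨t.1+1, ht⟩ = a ∧
          trY (setZc ⟨t.1+1, ht⟩ v ω) t = b ∧ trS (setZc ⟨t.1+1, ht⟩ v ω) t = d ∧
          trU (setZc ⟨t.1+1, ht⟩ v ω) t = e) ↔ _
        rw [CoreP_setZc', trX_setZc, trY_setZc, trS_setZc, trU_setZc])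
      (fun ω v => gInt_setZc' K πe πc t ht v ω)
  have h2 : ∀ (a : X) (b b' : Y) (c : Z) (d : S) (e : U),
      (∑ ω, ind (PinsP t ht sI uI δ a b c d e x yp zp ω) (gInt K πe πc t ω))
        = ∑ ω, ind (PinsP t ht sI uI δ a b' c d e x yp zp ω) (gInt K πe πc t ω) := by
    intro a b b' c d e
    have hto : ∀ (q : Y) ω, ind (PinsP t ht sI uI δ a q c d e x yp zp ω) (gInt K πe πc t ω)
        = ind ((CoreP t sI uI δ x yp zp ω ∧ trX ω ⟨t.1+1, ht⟩ = a ∧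
            trZ ω ⟨t.1+1, ht⟩ = c ∧ trS ω t = d ∧ trU ω t = e) ∧ trY ω t = q)
            (gInt K πe πc t ω) :=
      fun q ω => ind_congr (by unfold PinsP; tauto) fun _ => rfl
    simp only [hto]
    exact repin_sum' (fun ω => trY ω t) (fun ω v => setYc t v ω)
      (fun ω v => gsY ω v) (fun ω => sgY ω) (fun ω v w => ssY ω v w) b b' _ _
      (fun ω v => by
        show (CoreP t sI uI δ x yp zp (setYc t v ω) ∧ trX (setYc t v ω) ⟨t.1+1, ht⟩ = a ∧
          trZ (setYc t v ω) ⟨t.1+1, ht⟩ = c ∧ trS (setYc t v ω) t = d ∧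
          trU (setYc t v ω) t = e) ↔ _
        rw [CoreP_setYc, trX_setYc, trZ_setYc, trS_setYc, trU_setYc])
      (fun ω v => gInt_setYc K πe πc t v ω)
  have h1 : ∀ (a a' : X) (b : Y) (c : Z) (d : S) (e : U),
      (∑ ω, ind (PinsP t ht sI uI δ a b c d e x yp zp ω) (gInt K πe πc t ω))
        = ∑ ω, ind (PinsP t ht sI uI δ a' b c d e x yp zp ω) (gInt K πe πc t ω) := by
    intro a a' b c d e
    have hto : ∀ (q : X) ω, ind (PinsP t ht sI uI δ q b c d e x yp zp ω) (gInt K πe πc t ω)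
        = ind ((CoreP t sI uI δ x yp zp ω ∧ trY ω t = b ∧
            trZ ω ⟨t.1+1, ht⟩ = c ∧ trS ω t = d ∧ trU ω t = e) ∧ trX ω ⟨t.1+1, ht⟩ = q)
            (gInt K πe πc t ω) :=
      fun q ω => ind_congr (by unfold PinsP; tauto) fun _ => rfl
    simp only [hto]
    exact repin_sum' (fun ω => trX ω ⟨t.1+1, ht⟩) (fun ω v => setXc ⟨t.1+1, ht⟩ v ω)
      (fun ω v => gsX ω v) (fun ω => sgX ω) (fun ω v w => ssX ω v w) a a' _ _
      (fun ω v => by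
        show (CoreP t sI uI δ x yp zp (setXc ⟨t.1+1, ht⟩ v ω) ∧
          trY (setXc ⟨t.1+1, ht⟩ v ω) t = b ∧
          trZ (setXc ⟨t.1+1, ht⟩ v ω) ⟨t.1+1, ht⟩ = c ∧
          trS (setXc ⟨t.1+1, ht⟩ v ω) t = d ∧ trU (setXc ⟨t.1+1, ht⟩ v ω) t = e) ↔ _
        rw [CoreP_setXc', trY_setXc, trZ_setXc, trS_setXc, trU_setXc])
      (fun ω v => gInt_setXc' K πe πc t ht v ω)
  rw [h5 px py pz ps pu δ.2.2.2.2, h4 px py pz ps δ.2.2.2.1 _, h3 px py pz δ.2.2.1 _ _,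
    h2 px py δ.2.1 _ _ _, h1 px δ.1 _ _ _ _]
  rfl

end Main
section Main2

set_option maxHeartbeats 1000000

variable {T : ℕ} {X Y Z S U : Type} [Fintype X] [Fintype Y] [Fintype Z] [Fintype S] [Fintype U]
variable (K : Kernels X Y Z U) (πe : QPol T Z S U) (πc : CPol T S U)
variable (t : Fin T) (ht : t.1 + 1 < T)
variable (sI : Fin (t.1 + 1) → S) (uI : Fin (t.1 + 1) → U)
variable (δ : X × Y × Z × S × U)

lemma condA_iff (x : X) (yp : Fin t.1 → Y) (zp : Fin (t.1 + 1) → Z)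
    (ω : Traj T X Y Z S U) :
    ((((trX ω t = x ∧ hist (trY ω) t = yp ∧ histIncl (trZ ω) t = zp) ∧
        (hist (trS ω) t = trunc sI ∧ hist (trU ω) t = trunc uI)) ∧ Pin δ (t.1 + 1) ω) ∧
      trY ω t = δ.2.1 ∧ trS ω t = δ.2.2.2.1 ∧ trU ω t = δ.2.2.2.2)
    ↔ PinsP t ht sI uI δ δ.1 δ.2.1 δ.2.2.1 δ.2.2.2.1 δ.2.2.2.2 x yp zp ω := by
  constructor
  · rintro ⟨⟨⟨⟨hx, hy, hz⟩, hs, hu⟩, hPin⟩, hpy, hps, hpu⟩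
    refine ⟨⟨⟨hx, fun r hr => (hPin r (by omega)).1⟩,
      ⟨hy, fun r hr => (hPin r (by omega)).2.1⟩,
      ⟨hz, fun r hr => (hPin r (by omega)).2.2.1⟩,
      ⟨hs, fun r hr => (hPin r (by omega)).2.2.2.1⟩,
      ⟨hu, fun r hr => (hPin r (by omega)).2.2.2.2⟩⟩,
      (hPin ⟨t.1 + 1, ht⟩ (le_refl (t.1 + 1))).1, hpy,
      (hPin ⟨t.1 + 1, ht⟩ (le_refl (t.1 + 1))).2.2.1, hps, hpu⟩
  · rintro ⟨⟨⟨hx, hx'⟩, ⟨hy, hy'⟩, ⟨hz, hz'⟩, ⟨hs, hs'⟩, ⟨hu, hu'⟩⟩,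
      hpx, hpy, hpz, hps, hpu⟩
    refine ⟨⟨⟨⟨hx, hy, hz⟩, hs, hu⟩, fun r hr => ?_⟩, hpy, hps, hpu⟩
    rcases Nat.lt_or_ge r.1 (t.1 + 2) with hl | hg
    · have hrv : r = (⟨t.1 + 1, ht⟩ : Fin T) := Fin.ext (show r.1 = t.1 + 1 by omega)
      rw [hrv]
      exact ⟨hpx, hy' _ (le_refl (t.1 + 1)), hpz, hs' _ (le_refl (t.1 + 1)),
        hu' _ (le_refl (t.1 + 1))⟩
    · exact ⟨hx' r hg, hy' r (by omega), hz' r hg, hs' r (by omega), hu' r (by omega)⟩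

lemma L_A (hπe : IsQPol πe) (hπc : IsCPol πc)
    (x : X) (yp : Fin t.1 → Y) (zp : Fin (t.1 + 1) → Z) :
    pr (joint K πe πc)
      (fun ω => (trX ω t = x ∧ hist (trY ω) t = yp ∧ histIncl (trZ ω) t = zp) ∧
        (hist (trS ω) t = trunc sI ∧ hist (trU ω) t = trunc uI))
      = Abar K πe πc t ht sI uI δ x yp zp := by
  have hiX : ∀ i : Fin T, t.1 + 1 ≤ i.1 → ∀ (ω : Traj T X Y Z S U) (v : X),
      (((trX (setXc i v ω) t = x ∧ hist (trY (setXc i v ω)) t = yp ∧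
        histIncl (trZ (setXc i v ω)) t = zp) ∧
        (hist (trS (setXc i v ω)) t = trunc sI ∧ hist (trU (setXc i v ω)) t = trunc uI)))
      ↔ (((trX ω t = x ∧ hist (trY ω) t = yp ∧ histIncl (trZ ω) t = zp) ∧
        (hist (trS ω) t = trunc sI ∧ hist (trU ω) t = trunc uI))) := by
    intro i hi ω v
    rw [trX_setXc, trY_setXc, trZ_setXc, trS_setXc, trU_setXc,
      Function.update_of_ne (Fin.ne_of_val_ne (show t.1 ≠ i.1 by omega))]
  have hiY : ∀ i : Fin T, t.1 + 1 ≤ i.1 → ∀ (ω : Traj T X Y Z S U) (v : Y),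
      (((trX (setYc i v ω) t = x ∧ hist (trY (setYc i v ω)) t = yp ∧
        histIncl (trZ (setYc i v ω)) t = zp) ∧
        (hist (trS (setYc i v ω)) t = trunc sI ∧ hist (trU (setYc i v ω)) t = trunc uI)))
      ↔ (((trX ω t = x ∧ hist (trY ω) t = yp ∧ histIncl (trZ ω) t = zp) ∧
        (hist (trS ω) t = trunc sI ∧ hist (trU ω) t = trunc uI))) := by
    intro i hi ω v
    rw [trX_setYc, trY_setYc, trZ_setYc, trS_setYc, trU_setYc,
      hist_update_of_le (show t.1 ≤ i.1 by omega) v]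
  have hiZ : ∀ i : Fin T, t.1 + 1 ≤ i.1 → ∀ (ω : Traj T X Y Z S U) (v : Z),
      (((trX (setZc i v ω) t = x ∧ hist (trY (setZc i v ω)) t = yp ∧
        histIncl (trZ (setZc i v ω)) t = zp) ∧
        (hist (trS (setZc i v ω)) t = trunc sI ∧ hist (trU (setZc i v ω)) t = trunc uI)))
      ↔ (((trX ω t = x ∧ hist (trY ω) t = yp ∧ histIncl (trZ ω) t = zp) ∧
        (hist (trS ω) t = trunc sI ∧ hist (trU ω) t = trunc uI))) := by
    intro i hi ω v
    rw [trX_setZc, trY_setZc, trZ_setZc, trS_setZc, trU_setZc,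
      histIncl_update_of_lt (show t.1 < i.1 by omega) v]
  have hiS : ∀ i : Fin T, t.1 + 1 ≤ i.1 → ∀ (ω : Traj T X Y Z S U) (v : S),
      (((trX (setSc i v ω) t = x ∧ hist (trY (setSc i v ω)) t = yp ∧
        histIncl (trZ (setSc i v ω)) t = zp) ∧
        (hist (trS (setSc i v ω)) t = trunc sI ∧ hist (trU (setSc i v ω)) t = trunc uI)))
      ↔ (((trX ω t = x ∧ hist (trY ω) t = yp ∧ histIncl (trZ ω) t = zp) ∧
        (hist (trS ω) t = trunc sI ∧ hist (trU ω) t = trunc uI))) := by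
    intro i hi ω v
    rw [trX_setSc, trY_setSc, trZ_setSc, trS_setSc, trU_setSc,
      hist_update_of_le (show t.1 ≤ i.1 by omega) v]
  have hiU : ∀ i : Fin T, t.1 + 1 ≤ i.1 → ∀ (ω : Traj T X Y Z S U) (v : U),
      (((trX (setUc i v ω) t = x ∧ hist (trY (setUc i v ω)) t = yp ∧
        histIncl (trZ (setUc i v ω)) t = zp) ∧
        (hist (trS (setUc i v ω)) t = trunc sI ∧ hist (trU (setUc i v ω)) t = trunc uI)))
      ↔ (((trX ω t = x ∧ hist (trY ω) t = yp ∧ histIncl (trZ ω) t = zp) ∧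
        (hist (trS ω) t = trunc sI ∧ hist (trU ω) t = trunc uI))) := by
    intro i hi ω v
    rw [trX_setUc, trY_setUc, trZ_setUc, trS_setUc, trU_setUc,
      hist_update_of_le (show t.1 ≤ i.1 by omega) v]
  calc (pr (joint K πe πc)
      (fun ω => (trX ω t = x ∧ hist (trY ω) t = yp ∧ histIncl (trZ ω) t = zp) ∧
        (hist (trS ω) t = trunc sI ∧ hist (trU ω) t = trunc uI)))
      = ∑ ω, (fun ω => ind ((trX ω t = x ∧ hist (trY ω) t = yp ∧
          histIncl (trZ ω) t = zp) ∧
          (hist (trS ω) t = trunc sI ∧ hist (trU ω) t = trunc uI)) 1) ω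
          * joint K πe πc ω := pr_eq_sum_ind _ _
    _ = ∑ ω, ind (Pin δ (t.1 + 1) ω)
          ((fun ω => ind ((trX ω t = x ∧ hist (trY ω) t = yp ∧
            histIncl (trZ ω) t = zp) ∧
            (hist (trS ω) t = trunc sI ∧ hist (trU ω) t = trunc uI)) 1) ω
            * Iprod K πe πc (t.1 + 1) ω) :=
        marg K πe πc hπe hπc δ _ (t.1 + 1) (by omega)
          (fun i hi ω v => ind_congr (hiX i hi ω v) fun _ => rfl)
          (fun i hi ω v => ind_congr (hiY i hi ω v) fun _ => rfl)
          (fun i hi ω v => ind_congr (hiZ i hi ω v) fun _ => rfl)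
          (fun i hi ω v => ind_congr (hiS i hi ω v) fun _ => rfl)
          (fun i hi ω v => ind_congr (hiU i hi ω v) fun _ => rfl)
    _ = ∑ ω, ind ((fun ω => ((trX ω t = x ∧ hist (trY ω) t = yp ∧
          histIncl (trZ ω) t = zp) ∧
          (hist (trS ω) t = trunc sI ∧ hist (trU ω) t = trunc uI)) ∧
          Pin δ (t.1 + 1) ω) ω)
          ((fun ω => Iprod K πe πc t.1 ω) ω * fAll K πe πc t ω) := by
        refine Finset.sum_congr rfl fun ω _ => ?_
        rw [ind_mul_ind]
        refine ind_congr Iff.rfl fun _ => ?_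
        show Iprod K πe πc (t.1 + 1) ω = Iprod K πe πc t.1 ω * fAll K πe πc t ω
        rw [Iprod_succ K πe πc t.2]
    _ = ∑ ω, ind ((((trX ω t = x ∧ hist (trY ω) t = yp ∧
          histIncl (trZ ω) t = zp) ∧
          (hist (trS ω) t = trunc sI ∧ hist (trU ω) t = trunc uI)) ∧
          Pin δ (t.1 + 1) ω) ∧
          trY ω t = δ.2.1 ∧ trS ω t = δ.2.2.2.1 ∧ trU ω t = δ.2.2.2.2)
          (Iprod K πe πc t.1 ω * fxf K t ω * fzf K t ω) :=
        consume3 K πe πc hπe hπc t δ.2.1 δ.2.2.2.1 δ.2.2.2.2 _ _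
          (fun ω v => by
            show (((trX (setYc t v ω) t = x ∧ hist (trY (setYc t v ω)) t = yp ∧
              histIncl (trZ (setYc t v ω)) t = zp) ∧
              (hist (trS (setYc t v ω)) t = trunc sI ∧
                hist (trU (setYc t v ω)) t = trunc uI)) ∧
              Pin δ (t.1 + 1) (setYc t v ω)) ↔ _
            rw [trX_setYc, trY_setYc, trZ_setYc, trS_setYc, trU_setYc,
              hist_update_of_le (le_refl t.1) v, Pin_setYc (Nat.lt_succ_self t.1) v ω])
          (fun ω v => by
            show (((trX (setSc t v ω) t = x ∧ hist (trY (setSc t v ω)) t = yp ∧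
              histIncl (trZ (setSc t v ω)) t = zp) ∧
              (hist (trS (setSc t v ω)) t = trunc sI ∧
                hist (trU (setSc t v ω)) t = trunc uI)) ∧
              Pin δ (t.1 + 1) (setSc t v ω)) ↔ _
            rw [trX_setSc, trY_setSc, trZ_setSc, trS_setSc, trU_setSc,
              hist_update_of_le (le_refl t.1) v, Pin_setSc (Nat.lt_succ_self t.1) v ω])
          (fun ω v => by
            show (((trX (setUc t v ω) t = x ∧ hist (trY (setUc t v ω)) t = yp ∧
              histIncl (trZ (setUc t v ω)) t = zp) ∧
              (hist (trS (setUc t v ω)) t = trunc sI ∧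
                hist (trU (setUc t v ω)) t = trunc uI)) ∧
              Pin δ (t.1 + 1) (setUc t v ω)) ↔ _
            rw [trX_setUc, trY_setUc, trZ_setUc, trS_setUc, trU_setUc,
              hist_update_of_le (le_refl t.1) v, Pin_setUc (Nat.lt_succ_self t.1) v ω])
          (fun ω v => Iprod_setYc K πe πc (le_refl t.1) v ω)
          (fun ω v => Iprod_setSc K πe πc (le_refl t.1) v ω)
          (fun ω v => Iprod_setUc K πe πc (le_refl t.1) v ω)
    _ = Abar K πe πc t ht sI uI δ x yp zp := by
        refine Finset.sum_congr rfl fun ω _ => ?_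
        exact ind_congr (condA_iff t ht sI uI δ x yp zp ω) fun _ => rfl

end Main2
section Main3

set_option maxHeartbeats 1600000

variable {T : ℕ} {X Y Z S U : Type} [Fintype X] [Fintype Y] [Fintype Z] [Fintype S] [Fintype U]
variable (K : Kernels X Y Z U) (πe : QPol T Z S U) (πc : CPol T S U)
variable (t : Fin T) (ht : t.1 + 1 < T)
variable (sI : Fin (t.1 + 1) → S) (uI : Fin (t.1 + 1) → U)
variable (δ : X × Y × Z × S × U)

lemma condD_iff (x : X) (yp : Fin t.1 → Y) (zp : Fin (t.1 + 1) → Z)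
    (ω : Traj T X Y Z S U) :
    ((((histIncl (trS ω) t = sI ∧ histIncl (trU ω) t = uI) ∧ Pin δ (t.1 + 1) ω) ∧
        trY ω t = δ.2.1) ∧
      (trX ω t, hist (trY ω) t, histIncl (trZ ω) t) = (x, yp, zp))
    ↔ PinsP t ht sI uI δ δ.1 δ.2.1 δ.2.2.1 (sI (Fin.last t.1)) (uI (Fin.last t.1))
        x yp zp ω := by
  constructor
  · rintro ⟨⟨⟨⟨hs, hu⟩, hPin⟩, hpy⟩, hG⟩
    rw [Prod.mk.injEq, Prod.mk.injEq] at hG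
    obtain ⟨hx, hy, hz⟩ := hG
    refine ⟨⟨⟨hx, fun r hr => (hPin r (by omega)).1⟩,
      ⟨hy, fun r hr => (hPin r hr).2.1⟩,
      ⟨hz, fun r hr => (hPin r (by omega)).2.2.1⟩,
      ⟨(histIncl_eq_iff.mp hs).1, fun r hr => (hPin r hr).2.2.2.1⟩,
      ⟨(histIncl_eq_iff.mp hu).1, fun r hr => (hPin r hr).2.2.2.2⟩⟩,
      (hPin ⟨t.1 + 1, ht⟩ (le_refl (t.1 + 1))).1, hpy,
      (hPin ⟨t.1 + 1, ht⟩ (le_refl (t.1 + 1))).2.2.1,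
      (histIncl_eq_iff.mp hs).2, (histIncl_eq_iff.mp hu).2⟩
  · rintro ⟨⟨⟨hx, hx'⟩, ⟨hy, hy'⟩, ⟨hz, hz'⟩, ⟨hs, hs'⟩, ⟨hu, hu'⟩⟩,
      hpx, hpy, hpz, hps, hpu⟩
    refine ⟨⟨⟨⟨histIncl_eq_iff.mpr ⟨hs, hps⟩, histIncl_eq_iff.mpr ⟨hu, hpu⟩⟩,
      fun r hr => ?_⟩, hpy⟩, by rw [Prod.mk.injEq, Prod.mk.injEq]; exact ⟨hx, hy, hz⟩⟩
    rcases Nat.lt_or_ge r.1 (t.1 + 2) with hl | hg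
    · have hrv : r = (⟨t.1 + 1, ht⟩ : Fin T) := Fin.ext (show r.1 = t.1 + 1 by omega)
      rw [hrv]
      exact ⟨hpx, hy' _ (le_refl (t.1 + 1)), hpz, hs' _ (le_refl (t.1 + 1)),
        hu' _ (le_refl (t.1 + 1))⟩
    · exact ⟨hx' r hg, hy' r (by omega), hz' r hg, hs' r (by omega), hu' r (by omega)⟩

lemma L_D (hπe : IsQPol πe) (hπc : IsCPol πc) :
    pr (joint K πe πc)
      (fun ω => histIncl (trS ω) t = sI ∧ histIncl (trU ω) t = uI)
      = πc t sI (trunc uI) (uI (Fin.last t.1)) *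
        ∑ x : X, ∑ yp : Fin t.1 → Y, ∑ zp : Fin (t.1 + 1) → Z,
          πe t zp (trunc sI) (trunc uI) (sI (Fin.last t.1)) *
            Abar K πe πc t ht sI uI δ x yp zp := by
  calc (pr (joint K πe πc)
      (fun ω => histIncl (trS ω) t = sI ∧ histIncl (trU ω) t = uI))
      = ∑ ω, (fun ω => ind (histIncl (trS ω) t = sI ∧ histIncl (trU ω) t = uI) 1) ω
          * joint K πe πc ω := pr_eq_sum_ind _ _
    _ = ∑ ω, ind (Pin δ (t.1 + 1) ω)
          ((fun ω => ind (histIncl (trS ω) t = sI ∧ histIncl (trU ω) t = uI) 1) ω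
            * Iprod K πe πc (t.1 + 1) ω) :=
        marg K πe πc hπe hπc δ _ (t.1 + 1) (by omega)
          (fun i hi ω v => rfl)
          (fun i hi ω v => rfl)
          (fun i hi ω v => rfl)
          (fun i hi ω v => by
            show ind (histIncl (trS (setSc i v ω)) t = sI ∧
              histIncl (trU (setSc i v ω)) t = uI) 1 = _
            rw [trS_setSc, trU_setSc,
              histIncl_update_of_lt (show t.1 < i.1 by omega) v])
          (fun i hi ω v => by
            show ind (histIncl (trS (setUc i v ω)) t = sI ∧
              histIncl (trU (setUc i v ω)) t = uI) 1 = _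
            rw [trS_setUc, trU_setUc,
              histIncl_update_of_lt (show t.1 < i.1 by omega) v])
    _ = ∑ ω, ind ((fun ω => (histIncl (trS ω) t = sI ∧ histIncl (trU ω) t = uI) ∧
          Pin δ (t.1 + 1) ω) ω)
          (πc t sI (trunc uI) (uI (Fin.last t.1)) *
            ((fun ω => Iprod K πe πc t.1 ω * fxf K t ω * fzf K t ω *
              πe t (histIncl (trZ ω) t) (trunc sI) (trunc uI) (sI (Fin.last t.1))) ω
              * fyf K t ω)) := by
        refine Finset.sum_congr rfl fun ω _ => ?_
        rw [ind_mul_ind]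
        refine ind_congr Iff.rfl fun hc => ?_
        obtain ⟨⟨hs, hu⟩, hPin⟩ := hc
        have hsd := histIncl_eq_iff.mp hs
        have hud := histIncl_eq_iff.mp hu
        show Iprod K πe πc (t.1 + 1) ω = _
        rw [Iprod_succ K πe πc t.2]
        have e1 : fAll K πe πc t ω = fyf K t ω * fxf K t ω * fzf K t ω *
            (πe t (histIncl (trZ ω) t) (trunc sI) (trunc uI) (sI (Fin.last t.1))) *
            (πc t sI (trunc uI) (uI (Fin.last t.1))) := by
          unfold fAll
          have e2 : fsf πe t ω
              = πe t (histIncl (trZ ω) t) (trunc sI) (trunc uI) (sI (Fin.last t.1)) := by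
            unfold fsf
            rw [hsd.1, hud.1, hsd.2]
          have e3 : fuf πc t ω = πc t sI (trunc uI) (uI (Fin.last t.1)) := by
            unfold fuf
            rw [hs, hud.1, hud.2]
          rw [e2, e3]
        rw [e1]
        ring
    _ = πc t sI (trunc uI) (uI (Fin.last t.1)) *
        ∑ ω, ind ((fun ω => (histIncl (trS ω) t = sI ∧ histIncl (trU ω) t = uI) ∧
          Pin δ (t.1 + 1) ω) ω)
          ((fun ω => Iprod K πe πc t.1 ω * fxf K t ω * fzf K t ω *
            πe t (histIncl (trZ ω) t) (trunc sI) (trunc uI) (sI (Fin.last t.1))) ω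
            * fyf K t ω) := by
        rw [Finset.mul_sum]
        exact Finset.sum_congr rfl fun ω _ => ind_mul_left _ _
    _ = πc t sI (trunc uI) (uI (Fin.last t.1)) *
        ∑ ω, ind (((histIncl (trS ω) t = sI ∧ histIncl (trU ω) t = uI) ∧
          Pin δ (t.1 + 1) ω) ∧ trY ω t = δ.2.1)
          (Iprod K πe πc t.1 ω * fxf K t ω * fzf K t ω *
            πe t (histIncl (trZ ω) t) (trunc sI) (trunc uI) (sI (Fin.last t.1))) := by
        refine congrArg _ ?_
        exact step_sum' (fun ω => trY ω t) (fun ω v => setYc t v ω)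
          (fun ω v => gsY ω v) (fun ω => sgY ω) (fun ω v w => ssY ω v w) δ.2.1 _ _ (fyf K t)
          (fun ω v => by
            show ((histIncl (trS (setYc t v ω)) t = sI ∧
              histIncl (trU (setYc t v ω)) t = uI) ∧ Pin δ (t.1+1) (setYc t v ω)) ↔ _
            rw [trS_setYc, trU_setYc, Pin_setYc (Nat.lt_succ_self t.1) v ω])
          (fun ω v => by
            show Iprod K πe πc t.1 (setYc t v ω) * fxf K t (setYc t v ω) *
              fzf K t (setYc t v ω) *
              πe t (histIncl (trZ (setYc t v ω)) t) (trunc sI) (trunc uI)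
                (sI (Fin.last t.1)) = _
            rw [Iprod_setYc K πe πc (le_refl t.1), fxf_setYc_of_le K (le_refl t.1),
              fzf_setYc, trZ_setYc])
          (fun ω => sum_fyf K t ω)
    _ = πc t sI (trunc uI) (uI (Fin.last t.1)) *
        ∑ c : X × (Fin t.1 → Y) × (Fin (t.1 + 1) → Z), ∑ ω,
          ind ((trX ω t, hist (trY ω) t, histIncl (trZ ω) t) = c)
            (ind ((((histIncl (trS ω) t = sI ∧ histIncl (trU ω) t = uI) ∧
              Pin δ (t.1 + 1) ω) ∧ trY ω t = δ.2.1))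
              (Iprod K πe πc t.1 ω * fxf K t ω * fzf K t ω *
                πe t (histIncl (trZ ω) t) (trunc sI) (trunc uI) (sI (Fin.last t.1)))) :=
        congrArg _ (expand_sum (fun ω => (trX ω t, hist (trY ω) t, histIncl (trZ ω) t)) _)
    _ = πc t sI (trunc uI) (uI (Fin.last t.1)) *
        ∑ c : X × (Fin t.1 → Y) × (Fin (t.1 + 1) → Z),
          πe t c.2.2 (trunc sI) (trunc uI) (sI (Fin.last t.1)) *
            Abar K πe πc t ht sI uI δ c.1 c.2.1 c.2.2 := by
        refine congrArg _ (Finset.sum_congr rfl fun c _ => ?_)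
        obtain ⟨x, yp, zp⟩ := c
        calc (∑ ω, ind ((trX ω t, hist (trY ω) t, histIncl (trZ ω) t) = (x, yp, zp))
              (ind ((((histIncl (trS ω) t = sI ∧ histIncl (trU ω) t = uI) ∧
                Pin δ (t.1 + 1) ω) ∧ trY ω t = δ.2.1))
                (Iprod K πe πc t.1 ω * fxf K t ω * fzf K t ω *
                  πe t (histIncl (trZ ω) t) (trunc sI) (trunc uI) (sI (Fin.last t.1)))))
            = ∑ ω, ind (((((histIncl (trS ω) t = sI ∧ histIncl (trU ω) t = uI) ∧
                Pin δ (t.1 + 1) ω) ∧ trY ω t = δ.2.1) ∧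
                (trX ω t, hist (trY ω) t, histIncl (trZ ω) t) = (x, yp, zp)))
                (πe t zp (trunc sI) (trunc uI) (sI (Fin.last t.1)) * gInt K πe πc t ω) := by
              refine Finset.sum_congr rfl fun ω _ => ?_
              rw [ind_ind]
              refine ind_congr Iff.rfl fun hc => ?_
              have hz : histIncl (trZ ω) t = zp := by
                have := hc.2
                rw [Prod.mk.injEq, Prod.mk.injEq] at this
                exact this.2.2
              rw [hz]
              unfold gInt
              ring
          _ = πe t zp (trunc sI) (trunc uI) (sI (Fin.last t.1)) *
              ∑ ω, ind (((((histIncl (trS ω) t = sI ∧ histIncl (trU ω) t = uI) ∧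
                Pin δ (t.1 + 1) ω) ∧ trY ω t = δ.2.1) ∧
                (trX ω t, hist (trY ω) t, histIncl (trZ ω) t) = (x, yp, zp)))
                (gInt K πe πc t ω) := by
              rw [Finset.mul_sum]
              exact Finset.sum_congr rfl fun ω _ => ind_mul_left _ _
          _ = πe t zp (trunc sI) (trunc uI) (sI (Fin.last t.1)) *
              Abar K πe πc t ht sI uI δ x yp zp := by
              refine congrArg _ ?_
              calc (∑ ω, ind (((((histIncl (trS ω) t = sI ∧ histIncl (trU ω) t = uI) ∧
                    Pin δ (t.1 + 1) ω) ∧ trY ω t = δ.2.1) ∧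
                    (trX ω t, hist (trY ω) t, histIncl (trZ ω) t) = (x, yp, zp)))
                    (gInt K πe πc t ω))
                  = ∑ ω, ind (PinsP t ht sI uI δ δ.1 δ.2.1 δ.2.2.1 (sI (Fin.last t.1))
                      (uI (Fin.last t.1)) x yp zp ω) (gInt K πe πc t ω) :=
                    Finset.sum_congr rfl fun ω _ =>
                      ind_congr (condD_iff t ht sI uI δ x yp zp ω) fun _ => rfl
                _ = Abar K πe πc t ht sI uI δ x yp zp :=
                    repin_all K πe πc t ht sI uI δ _ _ _ _ _
    _ = πc t sI (trunc uI) (uI (Fin.last t.1)) *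
        ∑ x : X, ∑ yp : Fin t.1 → Y, ∑ zp : Fin (t.1 + 1) → Z,
          πe t zp (trunc sI) (trunc uI) (sI (Fin.last t.1)) *
            Abar K πe πc t ht sI uI δ x yp zp := by
        rw [Fintype.sum_prod_type]
        refine congrArg _ (Finset.sum_congr rfl fun x _ => ?_)
        rw [Fintype.sum_prod_type]

end Main3
section Main4

set_option maxHeartbeats 1600000

variable {T : ℕ} {X Y Z S U : Type} [Fintype X] [Fintype Y] [Fintype Z] [Fintype S] [Fintype U]
variable (K : Kernels X Y Z U) (πe : QPol T Z S U) (πc : CPol T S U)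
variable (t : Fin T) (ht : t.1 + 1 < T)
variable (sI : Fin (t.1 + 1) → S) (uI : Fin (t.1 + 1) → U)
variable (x' : X) (yI : Fin (t.1 + 1) → Y) (zI : Fin (t.1 + 1 + 1) → Z)
variable (δ : X × Y × Z × S × U)

lemma prev3_succ {x : Fin T → X} {y : Fin T → Y} {u : Fin T → U} {j : Fin T}
    (hj : j.1 + 1 < T) :
    prev3 x y u ⟨j.1 + 1, hj⟩ = some (x j, y j, u j) := rfl

lemma condM_iff (x : X) (ω : Traj T X Y Z S U) :
    ((((trX ω ⟨t.1 + 1, ht⟩ = x' ∧ histIncl (trY ω) t = yI ∧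
          histIncl (trZ ω) ⟨t.1 + 1, ht⟩ = zI) ∧
        (histIncl (trS ω) t = sI ∧ histIncl (trU ω) t = uI)) ∧ Pin δ (t.1 + 2) ω) ∧
      (trY ω ⟨t.1 + 1, ht⟩ = δ.2.1 ∧ trS ω ⟨t.1 + 1, ht⟩ = δ.2.2.2.1 ∧
        trU ω ⟨t.1 + 1, ht⟩ = δ.2.2.2.2)) ∧ trX ω t = x
    ↔ PinsP t ht sI uI δ x' (yI (Fin.last t.1)) (zI (Fin.last (t.1 + 1)))
        (sI (Fin.last t.1)) (uI (Fin.last t.1)) x (trunc yI) (trunc zI) ω := by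
  constructor
  · rintro ⟨⟨⟨⟨⟨hx', hy, hz⟩, hs, hu⟩, hPin⟩, hpy', hps', hpu'⟩, hpx⟩
    have hyd := histIncl_eq_iff.mp hy
    have hzd := histIncl_eq_iff.mp hz
    have hsd := histIncl_eq_iff.mp hs
    have hud := histIncl_eq_iff.mp hu
    refine ⟨⟨⟨hpx, fun r hr => (hPin r hr).1⟩,
      ⟨hyd.1, fun r hr => ?_⟩,
      ⟨hzd.1, fun r hr => (hPin r hr).2.2.1⟩,
      ⟨hsd.1, fun r hr => ?_⟩,
      ⟨hud.1, fun r hr => ?_⟩⟩,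
      hx', hyd.2, hzd.2, hsd.2, hud.2⟩
    · rcases Nat.lt_or_ge r.1 (t.1 + 2) with hl | hg
      · have hrv : r = (⟨t.1 + 1, ht⟩ : Fin T) := Fin.ext (show r.1 = t.1 + 1 by omega)
        rw [hrv]; exact hpy'
      · exact (hPin r hg).2.1
    · rcases Nat.lt_or_ge r.1 (t.1 + 2) with hl | hg
      · have hrv : r = (⟨t.1 + 1, ht⟩ : Fin T) := Fin.ext (show r.1 = t.1 + 1 by omega)
        rw [hrv]; exact hps'
      · exact (hPin r hg).2.2.2.1
    · rcases Nat.lt_or_ge r.1 (t.1 + 2) with hl | hg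
      · have hrv : r = (⟨t.1 + 1, ht⟩ : Fin T) := Fin.ext (show r.1 = t.1 + 1 by omega)
        rw [hrv]; exact hpu'
      · exact (hPin r hg).2.2.2.2
  · rintro ⟨⟨⟨hx, hx''⟩, ⟨hy, hy'⟩, ⟨hz, hz'⟩, ⟨hs, hs'⟩, ⟨hu, hu'⟩⟩,
      hpx, hpy, hpz, hps, hpu⟩
    refine ⟨⟨⟨⟨⟨hpx, histIncl_eq_iff.mpr ⟨hy, hpy⟩, histIncl_eq_iff.mpr ⟨hz, hpz⟩⟩,
      histIncl_eq_iff.mpr ⟨hs, hps⟩, histIncl_eq_iff.mpr ⟨hu, hpu⟩⟩,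
      fun r hr => ⟨hx'' r hr, hy' r (by omega), hz' r hr, hs' r (by omega),
        hu' r (by omega)⟩⟩,
      hy' _ (le_refl (t.1 + 1)), hs' _ (le_refl (t.1 + 1)),
      hu' _ (le_refl (t.1 + 1))⟩, hx⟩

lemma L_N (hπe : IsQPol πe) (hπc : IsCPol πc) :
    pr (joint K πe πc)
      (fun ω => (trX ω ⟨t.1 + 1, ht⟩ = x' ∧ histIncl (trY ω) t = yI ∧
          histIncl (trZ ω) ⟨t.1 + 1, ht⟩ = zI) ∧
        (histIncl (trS ω) t = sI ∧ histIncl (trU ω) t = uI))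
      = K.PZ x' (zI (Fin.last (t.1 + 1))) *
        (if t.1 = 0 then K.PY none (yI (Fin.last t.1))
          else K.PY (some (yI ⟨t.1 - 1, by have := ht; omega⟩)) (yI (Fin.last t.1))) *
        πe t (trunc zI) (trunc sI) (trunc uI) (sI (Fin.last t.1)) *
        πc t sI (trunc uI) (uI (Fin.last t.1)) *
        ∑ x : X, K.PX (some (x, yI (Fin.last t.1), uI (Fin.last t.1))) x' *
          Abar K πe πc t ht sI uI δ x (trunc yI) (trunc zI) := by
  set PYv : ℝ := (if t.1 = 0 then K.PY none (yI (Fin.last t.1))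

      else K.PY (some (yI ⟨t.1 - 1, by have := ht; omega⟩)) (yI (Fin.last t.1))) with hPYv
  set cst : ℝ := K.PZ x' (zI (Fin.last (t.1 + 1))) * PYv *
      πe t (trunc zI) (trunc sI) (trunc uI) (sI (Fin.last t.1)) *
      πc t sI (trunc uI) (uI (Fin.last t.1)) with hcst
  calc (pr (joint K πe πc)
      (fun ω => (trX ω ⟨t.1 + 1, ht⟩ = x' ∧ histIncl (trY ω) t = yI ∧
          histIncl (trZ ω) ⟨t.1 + 1, ht⟩ = zI) ∧
        (histIncl (trS ω) t = sI ∧ histIncl (trU ω) t = uI)))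
      = ∑ ω, (fun ω => ind ((trX ω ⟨t.1 + 1, ht⟩ = x' ∧ histIncl (trY ω) t = yI ∧
          histIncl (trZ ω) ⟨t.1 + 1, ht⟩ = zI) ∧
          (histIncl (trS ω) t = sI ∧ histIncl (trU ω) t = uI)) 1) ω
          * joint K πe πc ω := pr_eq_sum_ind _ _
    _ = ∑ ω, ind (Pin δ (t.1 + 2) ω)
          ((fun ω => ind ((trX ω ⟨t.1 + 1, ht⟩ = x' ∧ histIncl (trY ω) t = yI ∧
            histIncl (trZ ω) ⟨t.1 + 1, ht⟩ = zI) ∧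
            (histIncl (trS ω) t = sI ∧ histIncl (trU ω) t = uI)) 1) ω
            * Iprod K πe πc (t.1 + 2) ω) :=
        marg K πe πc hπe hπc δ _ (t.1 + 2) (by omega)
          (fun i hi ω v => by
            show ind ((trX (setXc i v ω) ⟨t.1 + 1, ht⟩ = x' ∧
              histIncl (trY (setXc i v ω)) t = yI ∧
              histIncl (trZ (setXc i v ω)) ⟨t.1 + 1, ht⟩ = zI) ∧
              (histIncl (trS (setXc i v ω)) t = sI ∧
                histIncl (trU (setXc i v ω)) t = uI)) 1 = _
            rw [trX_setXc, trY_setXc, trZ_setXc, trS_setXc, trU_setXc,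
              Function.update_of_ne (Fin.ne_of_val_ne (show t.1 + 1 ≠ i.1 by omega))])
          (fun i hi ω v => by
            show ind ((trX (setYc i v ω) ⟨t.1 + 1, ht⟩ = x' ∧
              histIncl (trY (setYc i v ω)) t = yI ∧
              histIncl (trZ (setYc i v ω)) ⟨t.1 + 1, ht⟩ = zI) ∧
              (histIncl (trS (setYc i v ω)) t = sI ∧
                histIncl (trU (setYc i v ω)) t = uI)) 1 = _
            rw [trX_setYc, trY_setYc, trZ_setYc, trS_setYc, trU_setYc,
              histIncl_update_of_lt (show t.1 < i.1 by omega) v])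
          (fun i hi ω v => by
            show ind ((trX (setZc i v ω) ⟨t.1 + 1, ht⟩ = x' ∧
              histIncl (trY (setZc i v ω)) t = yI ∧
              histIncl (trZ (setZc i v ω)) ⟨t.1 + 1, ht⟩ = zI) ∧
              (histIncl (trS (setZc i v ω)) t = sI ∧
                histIncl (trU (setZc i v ω)) t = uI)) 1 = _
            rw [trX_setZc, trY_setZc, trZ_setZc, trS_setZc, trU_setZc,
              histIncl_update_of_lt (show t.1 + 1 < i.1 by omega) v])
          (fun i hi ω v => by
            show ind ((trX (setSc i v ω) ⟨t.1 + 1, ht⟩ = x' ∧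
              histIncl (trY (setSc i v ω)) t = yI ∧
              histIncl (trZ (setSc i v ω)) ⟨t.1 + 1, ht⟩ = zI) ∧
              (histIncl (trS (setSc i v ω)) t = sI ∧
                histIncl (trU (setSc i v ω)) t = uI)) 1 = _
            rw [trX_setSc, trY_setSc, trZ_setSc, trS_setSc, trU_setSc,
              histIncl_update_of_lt (show t.1 < i.1 by omega) v])
          (fun i hi ω v => by
            show ind ((trX (setUc i v ω) ⟨t.1 + 1, ht⟩ = x' ∧
              histIncl (trY (setUc i v ω)) t = yI ∧
              histIncl (trZ (setUc i v ω)) ⟨t.1 + 1, ht⟩ = zI) ∧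
              (histIncl (trS (setUc i v ω)) t = sI ∧
                histIncl (trU (setUc i v ω)) t = uI)) 1 = _
            rw [trX_setUc, trY_setUc, trZ_setUc, trS_setUc, trU_setUc,
              histIncl_update_of_lt (show t.1 < i.1 by omega) v])
    _ = ∑ ω, ind ((fun ω => ((trX ω ⟨t.1 + 1, ht⟩ = x' ∧ histIncl (trY ω) t = yI ∧
          histIncl (trZ ω) ⟨t.1 + 1, ht⟩ = zI) ∧
          (histIncl (trS ω) t = sI ∧ histIncl (trU ω) t = uI)) ∧
          Pin δ (t.1 + 2) ω) ω)
          ((fun ω => Iprod K πe πc (t.1 + 1) ω) ω * fAll K πe πc ⟨t.1 + 1, ht⟩ ω) := by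
        refine Finset.sum_congr rfl fun ω _ => ?_
        rw [ind_mul_ind]
        refine ind_congr Iff.rfl fun _ => ?_
        show Iprod K πe πc (t.1 + 2) ω = _
        rw [Iprod_succ K πe πc ht]
    _ = ∑ ω, ind ((((trX ω ⟨t.1 + 1, ht⟩ = x' ∧ histIncl (trY ω) t = yI ∧
          histIncl (trZ ω) ⟨t.1 + 1, ht⟩ = zI) ∧
          (histIncl (trS ω) t = sI ∧ histIncl (trU ω) t = uI)) ∧
          Pin δ (t.1 + 2) ω) ∧
          trY ω ⟨t.1 + 1, ht⟩ = δ.2.1 ∧ trS ω ⟨t.1 + 1, ht⟩ = δ.2.2.2.1 ∧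
            trU ω ⟨t.1 + 1, ht⟩ = δ.2.2.2.2)
          (Iprod K πe πc (t.1 + 1) ω * fxf K ⟨t.1 + 1, ht⟩ ω * fzf K ⟨t.1 + 1, ht⟩ ω) :=
        consume3 K πe πc hπe hπc ⟨t.1 + 1, ht⟩ δ.2.1 δ.2.2.2.1 δ.2.2.2.2 _ _
          (fun ω v => by
            show (((trX (setYc ⟨t.1+1, ht⟩ v ω) ⟨t.1 + 1, ht⟩ = x' ∧
              histIncl (trY (setYc ⟨t.1+1, ht⟩ v ω)) t = yI ∧
              histIncl (trZ (setYc ⟨t.1+1, ht⟩ v ω)) ⟨t.1 + 1, ht⟩ = zI) ∧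
              (histIncl (trS (setYc ⟨t.1+1, ht⟩ v ω)) t = sI ∧
                histIncl (trU (setYc ⟨t.1+1, ht⟩ v ω)) t = uI)) ∧
              Pin δ (t.1 + 2) (setYc ⟨t.1+1, ht⟩ v ω)) ↔ _
            rw [trX_setYc, trY_setYc, trZ_setYc, trS_setYc, trU_setYc,
              histIncl_update_of_lt (Nat.lt_succ_self t.1) v,
              Pin_setYc (Nat.lt_succ_self (t.1 + 1)) v ω])
          (fun ω v => by
            show (((trX (setSc ⟨t.1+1, ht⟩ v ω) ⟨t.1 + 1, ht⟩ = x' ∧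
              histIncl (trY (setSc ⟨t.1+1, ht⟩ v ω)) t = yI ∧
              histIncl (trZ (setSc ⟨t.1+1, ht⟩ v ω)) ⟨t.1 + 1, ht⟩ = zI) ∧
              (histIncl (trS (setSc ⟨t.1+1, ht⟩ v ω)) t = sI ∧
                histIncl (trU (setSc ⟨t.1+1, ht⟩ v ω)) t = uI)) ∧
              Pin δ (t.1 + 2) (setSc ⟨t.1+1, ht⟩ v ω)) ↔ _
            rw [trX_setSc, trY_setSc, trZ_setSc, trS_setSc, trU_setSc,
              histIncl_update_of_lt (Nat.lt_succ_self t.1) v,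
              Pin_setSc (Nat.lt_succ_self (t.1 + 1)) v ω])
          (fun ω v => by
            show (((trX (setUc ⟨t.1+1, ht⟩ v ω) ⟨t.1 + 1, ht⟩ = x' ∧
              histIncl (trY (setUc ⟨t.1+1, ht⟩ v ω)) t = yI ∧
              histIncl (trZ (setUc ⟨t.1+1, ht⟩ v ω)) ⟨t.1 + 1, ht⟩ = zI) ∧
              (histIncl (trS (setUc ⟨t.1+1, ht⟩ v ω)) t = sI ∧
                histIncl (trU (setUc ⟨t.1+1, ht⟩ v ω)) t = uI)) ∧
              Pin δ (t.1 + 2) (setUc ⟨t.1+1, ht⟩ v ω)) ↔ _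
            rw [trX_setUc, trY_setUc, trZ_setUc, trS_setUc, trU_setUc,
              histIncl_update_of_lt (Nat.lt_succ_self t.1) v,
              Pin_setUc (Nat.lt_succ_self (t.1 + 1)) v ω])
          (fun ω v => Iprod_setYc K πe πc (le_refl (t.1 + 1)) v ω)
          (fun ω v => Iprod_setSc K πe πc (le_refl (t.1 + 1)) v ω)
          (fun ω v => Iprod_setUc K πe πc (le_refl (t.1 + 1)) v ω)
    _ = ∑ ω, ind ((((trX ω ⟨t.1 + 1, ht⟩ = x' ∧ histIncl (trY ω) t = yI ∧
          histIncl (trZ ω) ⟨t.1 + 1, ht⟩ = zI) ∧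
          (histIncl (trS ω) t = sI ∧ histIncl (trU ω) t = uI)) ∧
          Pin δ (t.1 + 2) ω) ∧
          trY ω ⟨t.1 + 1, ht⟩ = δ.2.1 ∧ trS ω ⟨t.1 + 1, ht⟩ = δ.2.2.2.1 ∧
            trU ω ⟨t.1 + 1, ht⟩ = δ.2.2.2.2)
          (cst * (gInt K πe πc t ω *
            K.PX (some (trX ω t, yI (Fin.last t.1), uI (Fin.last t.1))) x')) := by
        refine Finset.sum_congr rfl fun ω _ => ind_congr Iff.rfl fun hc => ?_
        obtain ⟨⟨⟨hx', hy, hz⟩, hs, hu⟩, hPin⟩ := hc.1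
        have hyd := histIncl_eq_iff.mp hy
        have hzd := histIncl_eq_iff.mp hz
        have hsd := histIncl_eq_iff.mp hs
        have hud := histIncl_eq_iff.mp hu
        have efz : fzf K ⟨t.1 + 1, ht⟩ ω = K.PZ x' (zI (Fin.last (t.1 + 1))) := by
          unfold fzf
          rw [hx', hzd.2]
        have efx : fxf K ⟨t.1 + 1, ht⟩ ω
            = K.PX (some (trX ω t, yI (Fin.last t.1), uI (Fin.last t.1))) x' := by
          unfold fxf
          rw [prev3_succ ht, hx', hyd.2, hud.2]
        have efy : fyf K t ω = PYv := by
          rw [hPYv]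
          unfold fyf prevO
          by_cases h0 : t.1 = 0
          · rw [if_pos h0, if_pos h0, hyd.2]
          · rw [if_neg h0, if_neg h0]
            have hyprev : trY ω ⟨t.1 - 1, by omega⟩ = yI ⟨t.1 - 1, by omega⟩ :=
              congrFun hy ⟨t.1 - 1, by omega⟩
            rw [hyprev, hyd.2]
        have efs : fsf πe t ω
            = πe t (trunc zI) (trunc sI) (trunc uI) (sI (Fin.last t.1)) := by
          unfold fsf
          rw [hsd.1, hud.1, hsd.2]
          exact congrArg (fun w => πe t w (trunc sI) (trunc uI) (sI (Fin.last t.1))) hzd.1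
        have efu : fuf πc t ω = πc t sI (trunc uI) (uI (Fin.last t.1)) := by
          unfold fuf
          rw [hs, hud.1, hud.2]
        show Iprod K πe πc (t.1 + 1) ω * fxf K ⟨t.1 + 1, ht⟩ ω * fzf K ⟨t.1 + 1, ht⟩ ω = _
        rw [Iprod_succ K πe πc t.2, efz, efx]
        unfold fAll
        rw [efy, efs, efu, hcst]
        unfold gInt
        ring
    _ = cst * ∑ x : X, ∑ ω,
          ind (trX ω t = x)
            (ind ((((trX ω ⟨t.1 + 1, ht⟩ = x' ∧ histIncl (trY ω) t = yI ∧
              histIncl (trZ ω) ⟨t.1 + 1, ht⟩ = zI) ∧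
              (histIncl (trS ω) t = sI ∧ histIncl (trU ω) t = uI)) ∧
              Pin δ (t.1 + 2) ω) ∧
              trY ω ⟨t.1 + 1, ht⟩ = δ.2.1 ∧ trS ω ⟨t.1 + 1, ht⟩ = δ.2.2.2.1 ∧
                trU ω ⟨t.1 + 1, ht⟩ = δ.2.2.2.2)
              (gInt K πe πc t ω *
                K.PX (some (trX ω t, yI (Fin.last t.1), uI (Fin.last t.1))) x')) := by
        rw [show (∑ ω, ind ((((trX ω ⟨t.1 + 1, ht⟩ = x' ∧ histIncl (trY ω) t = yI ∧
            histIncl (trZ ω) ⟨t.1 + 1, ht⟩ = zI) ∧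
            (histIncl (trS ω) t = sI ∧ histIncl (trU ω) t = uI)) ∧
            Pin δ (t.1 + 2) ω) ∧
            trY ω ⟨t.1 + 1, ht⟩ = δ.2.1 ∧ trS ω ⟨t.1 + 1, ht⟩ = δ.2.2.2.1 ∧
              trU ω ⟨t.1 + 1, ht⟩ = δ.2.2.2.2)
            (cst * (gInt K πe πc t ω *
              K.PX (some (trX ω t, yI (Fin.last t.1), uI (Fin.last t.1))) x')))
          = ∑ ω, cst * ind ((((trX ω ⟨t.1 + 1, ht⟩ = x' ∧ histIncl (trY ω) t = yI ∧
            histIncl (trZ ω) ⟨t.1 + 1, ht⟩ = zI) ∧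
            (histIncl (trS ω) t = sI ∧ histIncl (trU ω) t = uI)) ∧
            Pin δ (t.1 + 2) ω) ∧
            trY ω ⟨t.1 + 1, ht⟩ = δ.2.1 ∧ trS ω ⟨t.1 + 1, ht⟩ = δ.2.2.2.1 ∧
              trU ω ⟨t.1 + 1, ht⟩ = δ.2.2.2.2)
            (gInt K πe πc t ω *
              K.PX (some (trX ω t, yI (Fin.last t.1), uI (Fin.last t.1))) x')
          from Finset.sum_congr rfl fun ω _ => ind_mul_left _ _, ← Finset.mul_sum]
        refine congrArg _ ?_
        exact expand_sum (fun ω => trX ω t) _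
    _ = cst * ∑ x : X,
          K.PX (some (x, yI (Fin.last t.1), uI (Fin.last t.1))) x' *
            Abar K πe πc t ht sI uI δ x (trunc yI) (trunc zI) := by
        refine congrArg _ (Finset.sum_congr rfl fun x _ => ?_)
        calc (∑ ω, ind (trX ω t = x)
              (ind ((((trX ω ⟨t.1 + 1, ht⟩ = x' ∧ histIncl (trY ω) t = yI ∧
                histIncl (trZ ω) ⟨t.1 + 1, ht⟩ = zI) ∧
                (histIncl (trS ω) t = sI ∧ histIncl (trU ω) t = uI)) ∧
                Pin δ (t.1 + 2) ω) ∧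
                trY ω ⟨t.1 + 1, ht⟩ = δ.2.1 ∧ trS ω ⟨t.1 + 1, ht⟩ = δ.2.2.2.1 ∧
                  trU ω ⟨t.1 + 1, ht⟩ = δ.2.2.2.2)
                (gInt K πe πc t ω *
                  K.PX (some (trX ω t, yI (Fin.last t.1), uI (Fin.last t.1))) x')))
            = ∑ ω, ind (((((trX ω ⟨t.1 + 1, ht⟩ = x' ∧ histIncl (trY ω) t = yI ∧
                histIncl (trZ ω) ⟨t.1 + 1, ht⟩ = zI) ∧
                (histIncl (trS ω) t = sI ∧ histIncl (trU ω) t = uI)) ∧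
                Pin δ (t.1 + 2) ω) ∧
                (trY ω ⟨t.1 + 1, ht⟩ = δ.2.1 ∧ trS ω ⟨t.1 + 1, ht⟩ = δ.2.2.2.1 ∧
                  trU ω ⟨t.1 + 1, ht⟩ = δ.2.2.2.2)) ∧ trX ω t = x)
                (K.PX (some (x, yI (Fin.last t.1), uI (Fin.last t.1))) x' *
                  gInt K πe πc t ω) := by
              refine Finset.sum_congr rfl fun ω _ => ?_
              rw [ind_ind]
              refine ind_congr Iff.rfl fun hc => ?_
              rw [hc.2]
              ring
          _ = K.PX (some (x, yI (Fin.last t.1), uI (Fin.last t.1))) x' *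
              ∑ ω, ind (((((trX ω ⟨t.1 + 1, ht⟩ = x' ∧ histIncl (trY ω) t = yI ∧
                histIncl (trZ ω) ⟨t.1 + 1, ht⟩ = zI) ∧
                (histIncl (trS ω) t = sI ∧ histIncl (trU ω) t = uI)) ∧
                Pin δ (t.1 + 2) ω) ∧
                (trY ω ⟨t.1 + 1, ht⟩ = δ.2.1 ∧ trS ω ⟨t.1 + 1, ht⟩ = δ.2.2.2.1 ∧
                  trU ω ⟨t.1 + 1, ht⟩ = δ.2.2.2.2)) ∧ trX ω t = x)
                (gInt K πe πc t ω) := by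
              rw [Finset.mul_sum]
              exact Finset.sum_congr rfl fun ω _ => ind_mul_left _ _
          _ = K.PX (some (x, yI (Fin.last t.1), uI (Fin.last t.1))) x' *
              Abar K πe πc t ht sI uI δ x (trunc yI) (trunc zI) := by
              refine congrArg _ ?_
              rw [Finset.sum_congr rfl fun ω _ =>
                ind_congr (condM_iff t ht sI uI x' yI zI δ x ω) fun _ => rfl]
              exact repin_all K πe πc t ht sI uI δ _ _ _ _ _
    _ = K.PZ x' (zI (Fin.last (t.1 + 1))) * PYv *
        πe t (trunc zI) (trunc sI) (trunc uI) (sI (Fin.last t.1)) *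
        πc t sI (trunc uI) (uI (Fin.last t.1)) *
        ∑ x : X, K.PX (some (x, yI (Fin.last t.1), uI (Fin.last t.1))) x' *
          Abar K πe πc t ht sI uI δ x (trunc yI) (trunc zI) := by
        rw [hcst]

end Main4
section Assembly

set_option maxHeartbeats 1600000

variable {T : ℕ} {X Y Z S U : Type} [Fintype X] [Fintype Y] [Fintype Z] [Fintype S] [Fintype U]

lemma pr_congr {Ω : Type} [Fintype Ω] (P : Ω → ℝ) (E E' : Ω → Prop)
    (h : ∀ ω, E ω ↔ E' ω) : pr P E = pr P E' := by
  unfold pr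
  exact Finset.sum_congr rfl fun ω _ => if_congr (h ω) rfl rfl

lemma PF_eq (K : Kernels X Y Z U) (πe : QPol T Z S U) (πc : CPol T S U)
    (t : Fin T) (ht : t.1 + 1 < T)
    (sI : Fin (t.1 + 1) → S) (uI : Fin (t.1 + 1) → U) (δ : X × Y × Z × S × U)
    (hπe : IsQPol πe) (hπc : IsCPol πc) :
    pr (joint K πe πc)
      (fun ω => hist (trS ω) t = trunc sI ∧ hist (trU ω) t = trunc uI)
      = ∑ x : X, ∑ yp : Fin t.1 → Y, ∑ zp : Fin (t.1 + 1) → Z,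
          Abar K πe πc t ht sI uI δ x yp zp := by
  rw [pr_partition (joint K πe πc)
    (fun ω => (trX ω t, hist (trY ω) t, histIncl (trZ ω) t))
    (fun ω => hist (trS ω) t = trunc sI ∧ hist (trU ω) t = trunc uI)]
  rw [Fintype.sum_prod_type]
  refine Finset.sum_congr rfl fun x _ => ?_
  rw [Fintype.sum_prod_type]
  refine Finset.sum_congr rfl fun yp _ => ?_
  refine Finset.sum_congr rfl fun zp _ => ?_
  rw [pr_congr (joint K πe πc) _
    (fun ω => (trX ω t = x ∧ hist (trY ω) t = yp ∧ histIncl (trZ ω) t = zp) ∧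
      (hist (trS ω) t = trunc sI ∧ hist (trU ω) t = trunc uI))
    (fun ω => by simp only [Prod.mk.injEq]; try tauto)]
  exact L_A K πe πc t ht sI uI δ hπe hπc x yp zp

end Assembly
/-- Closed-loop belief-state update under a deterministic
controller: with
`b_t(x, y^{t-1}, z^t) = P(X_t = x, Y^{t-1} = y^{t-1}, Z^t = z^t | S^{t-1} = s^{t-1}, U^{t-1} = u^{t-1})` and
`b_{t+1}(x', y^t, z^{t+1}) = P(X_{t+1} = x', Y^t = y^t, Z^{t+1} = z^{t+1} | S^t = s^t, U^t = u^t)`,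
`b_{t+1}(x', y^t, z^{t+1}) =
  [ P_Z(z_{t+1}|x') · P_Y(y_t|y_{t-1}) · π^e_t(s_t|z^t,s^{t-1},u^{t-1}) ·
      Σ_x P_X(x'|x, y_t, u_t) · b_t(x, y^{t-1}, z^t) ] /
  [ Σ_{x, ỹ^{t-1}, z̃^t} π^e_t(s_t|z̃^t,s^{t-1},u^{t-1}) · b_t(x, ỹ^{t-1}, z̃^t) ]`,
where `u_t = μ_t(s^t, u^{t-1})` and conditioning at `t = 1` is vacuous. -/
theorem belief_closed_loop_update
    [Nonempty X] [Nonempty Y] [Nonempty Z] [Nonempty S] [Nonempty U]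
    (K : Kernels X Y Z U)
    (πe : QPol T Z S U) (πc : CPol T S U) (hπe : IsQPol πe) (hπc : IsCPol πc)
    (μ : (t : Fin T) → (Fin (t.1 + 1) → S) → (Fin t.1 → U) → U)
    (hdet : ∀ t ss us ut, πc t ss us ut = if ut = μ t ss us then 1 else 0)
    (t : Fin T) (ht : t.1 + 1 < T)
    (sI : Fin (t.1 + 1) → S) (uI : Fin (t.1 + 1) → U)
    (hpos : 0 < pr (joint K πe πc)
      (fun ω => histIncl (trS ω) t = sI ∧ histIncl (trU ω) t = uI))
    (bt : X → (Fin t.1 → Y) → (Fin (t.1 + 1) → Z) → ℝ)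
    (hbt : ∀ x yp zp, bt x yp zp =
      condPr (joint K πe πc)
        (fun ω => trX ω t = x ∧ hist (trY ω) t = yp ∧ histIncl (trZ ω) t = zp)
        (fun ω => hist (trS ω) t = trunc sI ∧ hist (trU ω) t = trunc uI))
    (x' : X) (yI : Fin (t.1 + 1) → Y) (zI : Fin (t.1 + 1 + 1) → Z) :
    condPr (joint K πe πc)
      (fun ω => trX ω ⟨t.1 + 1, ht⟩ = x' ∧ histIncl (trY ω) t = yI ∧
        histIncl (trZ ω) ⟨t.1 + 1, ht⟩ = zI)
      (fun ω => histIncl (trS ω) t = sI ∧ histIncl (trU ω) t = uI) =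
    (K.PZ x' (zI (Fin.last (t.1 + 1))) *
     (if t.1 = 0 then K.PY none (yI (Fin.last t.1))
      else K.PY (some (yI ⟨t.1 - 1, by omega⟩)) (yI (Fin.last t.1))) *
     πe t (trunc zI) (trunc sI) (trunc uI) (sI (Fin.last t.1)) *
     ∑ x : X,
       K.PX (some (x, yI (Fin.last t.1), μ t sI (trunc uI))) x' *
         bt x (trunc yI) (trunc zI)) /
    (∑ x : X, ∑ yp : Fin t.1 → Y, ∑ zp : Fin (t.1 + 1) → Z,
      πe t zp (trunc sI) (trunc uI) (sI (Fin.last t.1)) * bt x yp zp) := by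
  obtain ⟨δ⟩ : Nonempty (X × Y × Z × S × U) :=
    ⟨(Classical.arbitrary X, Classical.arbitrary Y, Classical.arbitrary Z,
      Classical.arbitrary S, Classical.arbitrary U)⟩
  have hjn : ∀ ω, 0 ≤ joint K πe πc ω := joint_nonneg K πe πc hπe hπc
  have hPFpos : 0 < pr (joint K πe πc)
      (fun ω => hist (trS ω) t = trunc sI ∧ hist (trU ω) t = trunc uI) :=
    lt_of_lt_of_le hpos (pr_mono _ hjn _ _
      (fun ω h => ⟨(histIncl_eq_iff.mp h.1).1, (histIncl_eq_iff.mp h.2).1⟩))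
  have hD := L_D K πe πc t ht sI uI δ hπe hπc
  have hμ : uI (Fin.last t.1) = μ t sI (trunc uI) := by
    by_contra hne
    rw [hD, hdet, if_neg hne, zero_mul] at hpos
    exact lt_irrefl 0 hpos
  have hκ1 : πc t sI (trunc uI) (uI (Fin.last t.1)) = 1 := by rw [hdet, if_pos hμ]
  have hN := L_N K πe πc t ht sI uI x' yI zI δ hπe hπc
  have hbt' : ∀ (x : X) (yp : Fin t.1 → Y) (zp : Fin (t.1 + 1) → Z),
      bt x yp zp = Abar K πe πc t ht sI uI δ x yp zp /
        pr (joint K πe πc)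
          (fun ω => hist (trS ω) t = trunc sI ∧ hist (trU ω) t = trunc uI) := by
    intro x yp zp
    rw [hbt x yp zp]
    unfold condPr
    rw [L_A K πe πc t ht sI uI δ hπe hπc x yp zp]
  unfold condPr
  rw [hN, hD, hκ1, mul_one, one_mul, ← hμ]
  simp only [hbt']
  have e1 : (∑ x : X, K.PX (some (x, yI (Fin.last t.1), uI (Fin.last t.1))) x' *
        (Abar K πe πc t ht sI uI δ x (trunc yI) (trunc zI) /
          pr (joint K πe πc)
            (fun ω => hist (trS ω) t = trunc sI ∧ hist (trU ω) t = trunc uI)))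
      = (∑ x : X, K.PX (some (x, yI (Fin.last t.1), uI (Fin.last t.1))) x' *
          Abar K πe πc t ht sI uI δ x (trunc yI) (trunc zI)) /
        pr (joint K πe πc)
          (fun ω => hist (trS ω) t = trunc sI ∧ hist (trU ω) t = trunc uI) := by
    rw [Finset.sum_div]
    exact Finset.sum_congr rfl fun x _ => (mul_div_assoc _ _ _).symm
  have e2 : (∑ x : X, ∑ yp : Fin t.1 → Y, ∑ zp : Fin (t.1 + 1) → Z,
        πe t zp (trunc sI) (trunc uI) (sI (Fin.last t.1)) *
          (Abar K πe πc t ht sI uI δ x yp zp /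
            pr (joint K πe πc)
              (fun ω => hist (trS ω) t = trunc sI ∧ hist (trU ω) t = trunc uI)))
      = (∑ x : X, ∑ yp : Fin t.1 → Y, ∑ zp : Fin (t.1 + 1) → Z,
          πe t zp (trunc sI) (trunc uI) (sI (Fin.last t.1)) *
            Abar K πe πc t ht sI uI δ x yp zp) /
        pr (joint K πe πc)
          (fun ω => hist (trS ω) t = trunc sI ∧ hist (trU ω) t = trunc uI) := by
    rw [Finset.sum_div]
    refine Finset.sum_congr rfl fun x _ => ?_
    rw [Finset.sum_div]
    refine Finset.sum_congr rfl fun yp _ => ?_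
    rw [Finset.sum_div]
    exact Finset.sum_congr rfl fun zp _ => (mul_div_assoc _ _ _).symm
  rw [e1, e2]
  rw [show (K.PZ x' (zI (Fin.last (t.1 + 1))) *
      (if t.1 = 0 then K.PY none (yI (Fin.last t.1))
        else K.PY (some (yI ⟨t.1 - 1, by omega⟩)) (yI (Fin.last t.1))) *
      πe t (trunc zI) (trunc sI) (trunc uI) (sI (Fin.last t.1)) *
      ((∑ x : X, K.PX (some (x, yI (Fin.last t.1), uI (Fin.last t.1))) x' *
          Abar K πe πc t ht sI uI δ x (trunc yI) (trunc zI)) /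
        pr (joint K πe πc)
          (fun ω => hist (trS ω) t = trunc sI ∧ hist (trU ω) t = trunc uI)))
    = (K.PZ x' (zI (Fin.last (t.1 + 1))) *
      (if t.1 = 0 then K.PY none (yI (Fin.last t.1))
        else K.PY (some (yI ⟨t.1 - 1, by omega⟩)) (yI (Fin.last t.1))) *
      πe t (trunc zI) (trunc sI) (trunc uI) (sI (Fin.last t.1)) *
      (∑ x : X, K.PX (some (x, yI (Fin.last t.1), uI (Fin.last t.1))) x' *
          Abar K πe πc t ht sI uI δ x (trunc yI) (trunc zI))) /
        pr (joint K πe πc)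
          (fun ω => hist (trS ω) t = trunc sI ∧ hist (trU ω) t = trunc uI)
    from (mul_div_assoc _ _ _).symm]
  rw [div_div_div_comm, div_self (ne_of_gt hPFpos), div_one]

end NCS
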